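/- arXiv:1908.04932 — 5 statements merged into one kernel-verified Lean document; each statement's English description precedes it below -/
import Mathlib

section
/- There is no odd deficient-perfect number of the form n = 3^{α1} · 5^{α2} · 29^{α3} · p^{α4} with deficient divisor d satisfying n/d ≥ 25, where p is a prime with p > 29 and α1, α2, α3, α4 are positive integers. That is, no such n admits a proper divisor d with σ(n) = 2n - d and n/d ≥ 25. -/
open Finset

lemma geom_key {q : ℕ} (hq : 1 ≤ q) (m : ℕ) :
    (q - 1) * (∑ i ∈ range m, q ^ i) + 1 = q ^ m := by
  obtain ⟨r, rfl⟩ : ∃ r, q = r + 1 := ⟨q - 1, by omega⟩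
  induction m with
  | zero => simp
  | succ k ih =>
    rw [sum_range_succ, pow_succ]
    simp only [Nat.add_sub_cancel] at ih ⊢
    nlinarith [ih]

lemma geom_parity {q : ℕ} (hq : q % 2 = 1) (m : ℕ) :
    (∑ i ∈ range m, q ^ i) % 2 = m % 2 := by
  induction m with
  | zero => simp
  | succ k ih =>
    rw [sum_range_succ]
    have : q ^ k % 2 = 1 := by
      rw [Nat.pow_mod, hq, one_pow]
      rfl
    omega

lemma self_not_dvd {N : ℕ} (hN : 2 ≤ N) (k : ℕ) :
    ¬ N ∣ ∑ i ∈ range (k + 1), N ^ i := by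
  intro h
  rw [Finset.sum_range_succ'] at h
  have h2 : N ∣ ∑ i ∈ range k, N ^ (i + 1) :=
    Finset.dvd_sum fun i _ => dvd_pow_self N (Nat.succ_ne_zero i)
  simp only [pow_zero] at h
  have : N ∣ 1 := (Nat.dvd_add_right h2).mp h
  have := Nat.le_of_dvd one_pos this
  omega

lemma not_dvd_geom {N q T : ℕ} (hq : 1 ≤ q) (hNT : (q : ZMod N) ^ T = 1)
    (hT2 : T % 2 = 0) (hTpos : 0 < T)
    (hdec : ∀ r, r < T → r % 2 = 1 → (q : ZMod N) ^ r ≠ 1)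
    {k : ℕ} (hk : k % 2 = 0) : ¬ N ∣ ∑ i ∈ range (k + 1), q ^ i := by
  intro hdvd
  have key := geom_key hq (k + 1)
  have hz : ((∑ i ∈ range (k + 1), q ^ i : ℕ) : ZMod N) = 0 :=
    (ZMod.natCast_eq_zero_iff _ _).2 hdvd
  have h1 : (1 : ZMod N) = (q : ZMod N) ^ (k + 1) := by
    have h0 := congrArg (fun x : ℕ => (x : ZMod N)) key
    simp only [Nat.cast_add, Nat.cast_mul, Nat.cast_one, Nat.cast_pow] at h0
    rw [hz, mul_zero, zero_add] at h0
    exact h0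
  have h2 : (q : ZMod N) ^ ((k + 1) % T) = 1 := by
    conv_rhs at h1 => rw [show k + 1 = T * ((k + 1) / T) + (k + 1) % T from (Nat.div_add_mod _ _).symm ▸ rfl]
    rw [pow_add, pow_mul, hNT, one_pow, one_mul] at h1
    exact h1.symm
  exact hdec _ (Nat.mod_lt _ hTpos) (by have := Nat.mod_mod_of_dvd (k+1) (show (2:ℕ) ∣ T by omega); omega) h2

lemma not_dvd_prod3 {q p : ℕ} (hq : q.Prime) (hp : p.Prime) (h5 : q ≠ 5) (h29 : q ≠ 29)
    (hP : q ≠ p) (α₂ α₃ α₄ : ℕ) : ¬ q ∣ 5 ^ α₂ * 29 ^ α₃ * p ^ α₄ := by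
  intro h
  rcases (Nat.Prime.dvd_mul hq).1 h with h | h
  · rcases (Nat.Prime.dvd_mul hq).1 h with h | h
    · exact h5 ((Nat.prime_dvd_prime_iff_eq hq (by norm_num)).1 (hq.dvd_of_dvd_pow h))
    · exact h29 ((Nat.prime_dvd_prime_iff_eq hq (by norm_num)).1 (hq.dvd_of_dvd_pow h))
  · exact hP ((Nat.prime_dvd_prime_iff_eq hq hp).1 (hq.dvd_of_dvd_pow h))

lemma not_dvd_prod {q p : ℕ} (hq : q.Prime) (hp : p.Prime) (h3 : q ≠ 3) (h5 : q ≠ 5)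
    (h29 : q ≠ 29) (hP : q ≠ p) (α₁ α₂ α₃ α₄ : ℕ) :
    ¬ q ∣ 3 ^ α₁ * 5 ^ α₂ * 29 ^ α₃ * p ^ α₄ := by
  intro h
  have heq : 3 ^ α₁ * 5 ^ α₂ * 29 ^ α₃ * p ^ α₄ = 3 ^ α₁ * (5 ^ α₂ * 29 ^ α₃ * p ^ α₄) := by ring
  rw [heq] at h
  rcases (Nat.Prime.dvd_mul hq).1 h with h | h
  · exact h3 ((Nat.prime_dvd_prime_iff_eq hq (by norm_num)).1 (hq.dvd_of_dvd_pow h))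
  · exact not_dvd_prod3 hq hp h5 h29 hP α₂ α₃ α₄ h

lemma not_dvd_sigma_prod {q SA SB SC SE : ℕ} (hq : q.Prime) (hA : ¬ q ∣ SA) (hB : ¬ q ∣ SB)
    (hC : ¬ q ∣ SC) (hE : ¬ q ∣ SE) : ¬ q ∣ SA * SB * SC * SE := by
  intro h
  rcases (Nat.Prime.dvd_mul hq).1 h with h | h
  · rcases (Nat.Prime.dvd_mul hq).1 h with h | h
    · rcases (Nat.Prime.dvd_mul hq).1 h with h | h
      · exact hA h
      · exact hB h
    · exact hC h
  · exact hE h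

-- class A : p % 3 = 2 (and p ≥ 41)
lemma auxA {p α₁ α₂ α₃ α₄ d k m : ℕ} (hp : p.Prime) (h29p : 29 < p)
    (hp41 : 41 ≤ p) (hp108 : p ≤ 108) (hpm3 : p % 3 = 2)
    (he₁ : α₁ % 2 = 0) (he₂ : α₂ % 2 = 0) (he₃ : α₃ % 2 = 0) (he₄ : α₄ % 2 = 0)
    (h1 : 0 < α₁) (h2 : 0 < α₂) (h3 : 0 < α₃) (h4 : 0 < α₄)
    (hd0 : 0 < d)
    (hn : d * k = 3 ^ α₁ * 5 ^ α₂ * 29 ^ α₃ * p ^ α₄)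
    (hσdm : (∑ i ∈ range (α₁+1), 3^i) * (∑ i ∈ range (α₂+1), 5^i) *
      (∑ i ∈ range (α₃+1), 29^i) * (∑ i ∈ range (α₄+1), p^i) = d * m)
    (h2k : 2 * k = m + 1) (hk25 : 25 ≤ k)
    (hmaster : 224 * (p-1) * m < 435 * p * k) : False := by
  have hpz : (p : ZMod 3) = 2 := by
    have h := ZMod.natCast_mod p 3
    rw [hpm3] at h
    rw [← h]; rfl
  have hA3 : ¬ (3:ℕ) ∣ ∑ i ∈ range (α₁+1), 3^i := self_not_dvd (by norm_num) _
  have hB3 : ¬ (3:ℕ) ∣ ∑ i ∈ range (α₂+1), 5^i :=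
    not_dvd_geom (N:=3) (q:=5) (T:=2) (by norm_num) (by decide) (by norm_num) (by norm_num)
      (by decide) he₂
  have hC3 : ¬ (3:ℕ) ∣ ∑ i ∈ range (α₃+1), 29^i :=
    not_dvd_geom (N:=3) (q:=29) (T:=2) (by norm_num) (by decide) (by norm_num) (by norm_num)
      (by decide) he₃
  have hE3 : ¬ (3:ℕ) ∣ ∑ i ∈ range (α₄+1), p^i := by
    refine not_dvd_geom (T := 2) (by omega) ?_ (by norm_num) (by norm_num) ?_ he₄
    · rw [hpz]; decide
    · intro r hr hro
      interval_cases r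
      · omega
      · rw [pow_one, hpz]; decide
  have hσ3 : ¬ (3:ℕ) ∣ (∑ i ∈ range (α₁+1), 3^i) * (∑ i ∈ range (α₂+1), 5^i) *
      (∑ i ∈ range (α₃+1), 29^i) * (∑ i ∈ range (α₄+1), p^i) :=
    not_dvd_sigma_prod (by norm_num) hA3 hB3 hC3 hE3
  have hd3 : ¬ (3:ℕ) ∣ d := fun h => hσ3 (hσdm ▸ (h.mul_right m))
  have h3k : 3 ^ α₁ ∣ k := by
    have hdk : 3 ^ α₁ ∣ d * k := by
      rw [hn]; exact ⟨5 ^ α₂ * 29 ^ α₃ * p ^ α₄, by ring⟩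
    exact (Nat.Coprime.pow_left α₁
      ((Nat.Prime.coprime_iff_not_dvd (by norm_num)).2 hd3)).dvd_of_dvd_mul_left hdk
  have h9k : (9:ℕ) ∣ k := dvd_trans (by
    have : (3:ℕ)^2 ∣ 3^α₁ := pow_dvd_pow 3 (by omega)
    simpa using this) h3k
  have hkodd : ¬ (2:ℕ) ∣ k := by
    intro h
    exact not_dvd_prod (q:=2) (by norm_num) hp (by norm_num) (by norm_num) (by norm_num)
      (by omega) α₁ α₂ α₃ α₄ (hn ▸ (h.mul_left d))
  have hk105 : k ≤ 105 := by
    by_contra hcon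
    push_neg at hcon
    have hmz : (224:ℤ) * ((p:ℤ)-1) * (m:ℤ) < 435 * (p:ℤ) * (k:ℤ) := by
      have := hmaster
      zify [show 1 ≤ p by omega] at this
      exact this
    have hm' : (2:ℤ) * (k:ℤ) = (m:ℤ) + 1 := by exact_mod_cast h2k
    have hpz' : (41:ℤ) ≤ (p:ℤ) := by exact_mod_cast hp41
    have hkz' : (106:ℤ) ≤ (k:ℤ) := by exact_mod_cast hcon
    nlinarith [mul_nonneg (show (0:ℤ) ≤ (p:ℤ) - 41 by linarith)
      (show (0:ℤ) ≤ (k:ℤ) - 106 by linarith)]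
  have hkcases : k = 27 ∨ k = 45 ∨ k = 63 ∨ k = 81 ∨ k = 99 := by omega
  -- helper facts
  have hα₁le : ∀ c : ℕ, 3 ^ α₁ ∣ c → 0 < c → 3 ^ α₁ ≤ c := fun c hc h0 => Nat.le_of_dvd h0 hc
  rcases hkcases with rfl | rfl | rfl | rfl | rfl
  · -- k = 27
    have hle : 3 ^ α₁ ≤ 27 := Nat.le_of_dvd (by norm_num) h3k
    have ha2 : α₁ = 2 := by
      by_contra hne
      have h4' : 4 ≤ α₁ := by omega
      have : (3:ℕ)^4 ≤ 3^α₁ := Nat.pow_le_pow_right (by norm_num) h4'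
      norm_num at this; omega
    subst ha2
    have h27 : (27:ℕ) ∣ 3^2 * (5^α₂*29^α₃*p^α₄) := by
      have : (27:ℕ) ∣ d * 27 := ⟨d, by ring⟩
      rw [hn] at this
      rw [show (3:ℕ)^2 * (5^α₂*29^α₃*p^α₄) = 3^2*5^α₂*29^α₃*p^α₄ from by ring]
      exact this
    obtain ⟨t, ht⟩ := h27
    norm_num at ht
    have h3M : (3:ℕ) ∣ 5^α₂*29^α₃*p^α₄ := ⟨t, by omega⟩
    exact not_dvd_prod3 (by norm_num) hp (by norm_num) (by norm_num) (by omega) _ _ _ h3M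
  · -- k = 45
    have hm89 : m = 89 := by omega
    subst hm89
    have hle : 3 ^ α₁ ≤ 45 := Nat.le_of_dvd (by norm_num) h3k
    have ha2 : α₁ = 2 := by
      by_contra hne
      have h4' : 4 ≤ α₁ := by omega
      have : (3:ℕ)^4 ≤ 3^α₁ := Nat.pow_le_pow_right (by norm_num) h4'
      norm_num at this; omega
    subst ha2
    rw [show (∑ i ∈ range (2+1), (3:ℕ)^i) = 13 from by decide] at hσdm
    have h13 : (13:ℕ) ∣ d * 89 := by
      rw [← hσdm]
      exact ((dvd_mul_right 13 _).mul_right _).mul_right _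
    rcases (Nat.Prime.dvd_mul (by norm_num)).1 h13 with h | h
    · exact not_dvd_prod (by norm_num) hp (by norm_num) (by norm_num) (by norm_num)
        (by omega) 2 α₂ α₃ α₄ (hn ▸ (h.mul_right 45))
    · norm_num at h
  · -- k = 63
    have h7 : (7:ℕ) ∣ d * 63 := ⟨d * 9, by ring⟩
    exact not_dvd_prod (by norm_num) hp (by norm_num) (by norm_num) (by norm_num)
      (by omega) α₁ α₂ α₃ α₄ (hn ▸ h7)
  · -- k = 81
    have hm161 : m = 161 := by omega
    subst hm161
    have hle : 3 ^ α₁ ≤ 81 := Nat.le_of_dvd (by norm_num) h3k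
    have ha : α₁ = 2 ∨ α₁ = 4 := by
      by_contra hne
      push_neg at hne
      have h6' : 6 ≤ α₁ := by omega
      have : (3:ℕ)^6 ≤ 3^α₁ := Nat.pow_le_pow_right (by norm_num) h6'
      norm_num at this; omega
    rcases ha with ha2 | ha4
    · subst ha2
      have h27 : (27:ℕ) ∣ 3^2 * (5^α₂*29^α₃*p^α₄) := by
        have : (27:ℕ) ∣ d * 81 := ⟨d * 3, by ring⟩
        rw [hn] at this
        rw [show (3:ℕ)^2 * (5^α₂*29^α₃*p^α₄) = 3^2*5^α₂*29^α₃*p^α₄ from by ring]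
        exact this
      obtain ⟨t, ht⟩ := h27
      norm_num at ht
      have h3M : (3:ℕ) ∣ 5^α₂*29^α₃*p^α₄ := ⟨t, by omega⟩
      exact not_dvd_prod3 (by norm_num) hp (by norm_num) (by norm_num) (by omega) _ _ _ h3M
    · subst ha4
      rw [show (∑ i ∈ range (4+1), (3:ℕ)^i) = 121 from by decide] at hσdm
      have h11 : (11:ℕ) ∣ d * 161 := by
        rw [← hσdm]
        exact (((show (11:ℕ) ∣ 121 from ⟨11, rfl⟩).mul_right _).mul_right _).mul_right _
      rcases (Nat.Prime.dvd_mul (by norm_num)).1 h11 with h | h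
      · exact not_dvd_prod (by norm_num) hp (by norm_num) (by norm_num) (by norm_num)
          (by omega) 4 α₂ α₃ α₄ (hn ▸ (h.mul_right 81))
      · norm_num at h
  · -- k = 99
    have h11 : (11:ℕ) ∣ d * 99 := ⟨d * 9, by ring⟩
    exact not_dvd_prod (by norm_num) hp (by norm_num) (by norm_num) (by norm_num)
      (by omega) α₁ α₂ α₃ α₄ (hn ▸ h11)

-- class B : ord_29(p) even (29 ∤ σ(p^e)) and 37 ≤ p ≤ 108
lemma auxB {p α₁ α₂ α₃ α₄ d k m : ℕ} (hp : p.Prime) (h29p : 29 < p)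
    (hp37 : 37 ≤ p) (hp108 : p ≤ 108)
    (he₁ : α₁ % 2 = 0) (he₂ : α₂ % 2 = 0) (he₃ : α₃ % 2 = 0) (he₄ : α₄ % 2 = 0)
    (h1 : 0 < α₁) (h2 : 0 < α₂) (h3 : 0 < α₃) (h4 : 0 < α₄)
    (hd0 : 0 < d)
    (hn : d * k = 3 ^ α₁ * 5 ^ α₂ * 29 ^ α₃ * p ^ α₄)
    (hσdm : (∑ i ∈ range (α₁+1), 3^i) * (∑ i ∈ range (α₂+1), 5^i) *
      (∑ i ∈ range (α₃+1), 29^i) * (∑ i ∈ range (α₄+1), p^i) = d * m)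
    (h2k : 2 * k = m + 1) (hk25 : 25 ≤ k)
    (hmaster : 224 * (p-1) * m < 435 * p * k)
    (hE29 : ¬ (29:ℕ) ∣ ∑ i ∈ range (α₄+1), p^i) : False := by
  have hA29 : ¬ (29:ℕ) ∣ ∑ i ∈ range (α₁+1), 3^i :=
    not_dvd_geom (N:=29) (q:=3) (T:=28) (by norm_num) (by decide) (by norm_num) (by norm_num)
      (by decide) he₁
  have hB29 : ¬ (29:ℕ) ∣ ∑ i ∈ range (α₂+1), 5^i :=
    not_dvd_geom (N:=29) (q:=5) (T:=28) (by norm_num) (by decide) (by norm_num) (by norm_num)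
      (by decide) he₂
  have hC29 : ¬ (29:ℕ) ∣ ∑ i ∈ range (α₃+1), 29^i := self_not_dvd (by norm_num) _
  have hσ29 : ¬ (29:ℕ) ∣ (∑ i ∈ range (α₁+1), 3^i) * (∑ i ∈ range (α₂+1), 5^i) *
      (∑ i ∈ range (α₃+1), 29^i) * (∑ i ∈ range (α₄+1), p^i) :=
    not_dvd_sigma_prod (by norm_num) hA29 hB29 hC29 hE29
  have hd29 : ¬ (29:ℕ) ∣ d := fun h => hσ29 (hσdm ▸ (h.mul_right m))
  have h29k : 29 ^ α₃ ∣ k := by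
    have hdk : 29 ^ α₃ ∣ d * k := by
      rw [hn]; exact ⟨3 ^ α₁ * 5 ^ α₂ * p ^ α₄, by ring⟩
    exact (Nat.Coprime.pow_left α₃
      ((Nat.Prime.coprime_iff_not_dvd (by norm_num)).2 hd29)).dvd_of_dvd_mul_left hdk
  have hk841 : 841 ≤ k := by
    have h1' : (29:ℕ)^2 ≤ 29^α₃ := Nat.pow_le_pow_right (by norm_num) (by omega)
    have := Nat.le_of_dvd (by omega) h29k
    norm_num at h1'; omega
  have hmz : (224:ℤ) * ((p:ℤ)-1) * (m:ℤ) < 435 * (p:ℤ) * (k:ℤ) := by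
    have := hmaster
    zify [show 1 ≤ p by omega] at this
    exact this
  have hm' : (2:ℤ) * (k:ℤ) = (m:ℤ) + 1 := by exact_mod_cast h2k
  have hpz' : (37:ℤ) ≤ (p:ℤ) := by exact_mod_cast hp37
  have hpz'' : (p:ℤ) ≤ 108 := by exact_mod_cast hp108
  have hkz' : (841:ℤ) ≤ (k:ℤ) := by exact_mod_cast hk841
  nlinarith [mul_nonneg (show (0:ℤ) ≤ (p:ℤ) - 37 by linarith)
      (show (0:ℤ) ≤ (k:ℤ) by positivity)]

-- p = 103
lemma auxC {α₁ α₂ α₃ α₄ d k m : ℕ}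
    (he₁ : α₁ % 2 = 0) (he₂ : α₂ % 2 = 0) (he₃ : α₃ % 2 = 0) (he₄ : α₄ % 2 = 0)
    (h1 : 0 < α₁) (h2 : 0 < α₂) (h3 : 0 < α₃) (h4 : 0 < α₄)
    (hd0 : 0 < d)
    (hn : d * k = 3 ^ α₁ * 5 ^ α₂ * 29 ^ α₃ * 103 ^ α₄)
    (hσdm : (∑ i ∈ range (α₁+1), 3^i) * (∑ i ∈ range (α₂+1), 5^i) *
      (∑ i ∈ range (α₃+1), 29^i) * (∑ i ∈ range (α₄+1), 103^i) = d * m)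
    (h2k : 2 * k = m + 1) (hk25 : 25 ≤ k)
    (hmaster : 224 * (103-1) * m < 435 * 103 * k) : False := by
  have hk : k = 25 := by omega
  subst hk
  have hm : m = 49 := by omega
  subst hm
  have hA5 : ¬ (5:ℕ) ∣ ∑ i ∈ range (α₁+1), 3^i :=
    not_dvd_geom (N:=5) (q:=3) (T:=4) (by norm_num) (by decide) (by norm_num) (by norm_num)
      (by decide) he₁
  have hB5 : ¬ (5:ℕ) ∣ ∑ i ∈ range (α₂+1), 5^i := self_not_dvd (by norm_num) _
  have hC5 : ¬ (5:ℕ) ∣ ∑ i ∈ range (α₃+1), 29^i :=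
    not_dvd_geom (N:=5) (q:=29) (T:=4) (by norm_num) (by decide) (by norm_num) (by norm_num)
      (by decide) he₃
  have hE5 : ¬ (5:ℕ) ∣ ∑ i ∈ range (α₄+1), 103^i :=
    not_dvd_geom (N:=5) (q:=103) (T:=4) (by norm_num) (by decide) (by norm_num) (by norm_num)
      (by decide) he₄
  have hσ5 : ¬ (5:ℕ) ∣ (∑ i ∈ range (α₁+1), 3^i) * (∑ i ∈ range (α₂+1), 5^i) *
      (∑ i ∈ range (α₃+1), 29^i) * (∑ i ∈ range (α₄+1), 103^i) :=
    not_dvd_sigma_prod (by norm_num) hA5 hB5 hC5 hE5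
  have hd5 : ¬ (5:ℕ) ∣ d := fun h => hσ5 (hσdm ▸ (h.mul_right 49))
  have h5k : 5 ^ α₂ ∣ 25 := by
    have hdk : 5 ^ α₂ ∣ d * 25 := by
      rw [hn]; exact ⟨3 ^ α₁ * 29 ^ α₃ * 103 ^ α₄, by ring⟩
    exact (Nat.Coprime.pow_left α₂
      ((Nat.Prime.coprime_iff_not_dvd (by norm_num)).2 hd5)).dvd_of_dvd_mul_left hdk
  have ha2 : α₂ = 2 := by
    have hle : 5 ^ α₂ ≤ 25 := Nat.le_of_dvd (by norm_num) h5k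
    by_contra hne
    have h4' : 3 ≤ α₂ := by omega
    have : (5:ℕ)^3 ≤ 5^α₂ := Nat.pow_le_pow_right (by norm_num) h4'
    norm_num at this; omega
  subst ha2
  rw [show (∑ i ∈ range (2+1), (5:ℕ)^i) = 31 from by decide] at hσdm
  have h31 : (31:ℕ) ∣ d * 49 := by
    rw [← hσdm]
    exact ((dvd_mul_left 31 _).mul_right _).mul_right _
  rcases (Nat.Prime.dvd_mul (by norm_num)).1 h31 with h | h
  · exact not_dvd_prod (by norm_num) (by norm_num) (by norm_num) (by norm_num) (by norm_num)
      (by norm_num) α₁ 2 α₃ α₄ (hn ▸ (h.mul_right 25))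
  · norm_num at h

-- p = 31
lemma auxD {α₁ α₂ α₃ α₄ d k m : ℕ}
    (he₁ : α₁ % 2 = 0) (he₂ : α₂ % 2 = 0) (he₃ : α₃ % 2 = 0) (he₄ : α₄ % 2 = 0)
    (h1 : 0 < α₁) (h2 : 0 < α₂) (h3 : 0 < α₃) (h4 : 0 < α₄)
    (hd0 : 0 < d)
    (hn : d * k = 3 ^ α₁ * 5 ^ α₂ * 29 ^ α₃ * 31 ^ α₄)
    (hσdm : (∑ i ∈ range (α₁+1), 3^i) * (∑ i ∈ range (α₂+1), 5^i) *
      (∑ i ∈ range (α₃+1), 29^i) * (∑ i ∈ range (α₄+1), 31^i) = d * m)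
    (h2k : 2 * k = m + 1) (hk25 : 25 ≤ k) : False := by
  -- 29 ∤ σ
  have hA29 : ¬ (29:ℕ) ∣ ∑ i ∈ range (α₁+1), 3^i :=
    not_dvd_geom (N:=29) (q:=3) (T:=28) (by norm_num) (by decide) (by norm_num) (by norm_num)
      (by decide) he₁
  have hB29 : ¬ (29:ℕ) ∣ ∑ i ∈ range (α₂+1), 5^i :=
    not_dvd_geom (N:=29) (q:=5) (T:=28) (by norm_num) (by decide) (by norm_num) (by norm_num)
      (by decide) he₂
  have hC29 : ¬ (29:ℕ) ∣ ∑ i ∈ range (α₃+1), 29^i := self_not_dvd (by norm_num) _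
  have hE29 : ¬ (29:ℕ) ∣ ∑ i ∈ range (α₄+1), 31^i :=
    not_dvd_geom (N:=29) (q:=31) (T:=28) (by norm_num) (by decide) (by norm_num) (by norm_num)
      (by decide) he₄
  have hσ29 : ¬ (29:ℕ) ∣ (∑ i ∈ range (α₁+1), 3^i) * (∑ i ∈ range (α₂+1), 5^i) *
      (∑ i ∈ range (α₃+1), 29^i) * (∑ i ∈ range (α₄+1), 31^i) :=
    not_dvd_sigma_prod (by norm_num) hA29 hB29 hC29 hE29
  have hd29 : ¬ (29:ℕ) ∣ d := fun h => hσ29 (hσdm ▸ (h.mul_right m))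
  have h29k : 29 ^ α₃ ∣ k := by
    have hdk : 29 ^ α₃ ∣ d * k := by
      rw [hn]; exact ⟨3 ^ α₁ * 5 ^ α₂ * 31 ^ α₄, by ring⟩
    exact (Nat.Coprime.pow_left α₃
      ((Nat.Prime.coprime_iff_not_dvd (by norm_num)).2 hd29)).dvd_of_dvd_mul_left hdk
  have hk841 : 841 ≤ k := by
    have h1' : (29:ℕ)^2 ≤ 29^α₃ := Nat.pow_le_pow_right (by norm_num) (by omega)
    have := Nat.le_of_dvd (by omega) h29k
    norm_num at h1'; omega
  -- geometric identities
  have g3 := geom_key (show 1 ≤ 3 by norm_num) (α₁+1)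
  have g5 := geom_key (show 1 ≤ 5 by norm_num) (α₂+1)
  have g29 := geom_key (show 1 ≤ 29 by norm_num) (α₃+1)
  have g31 := geom_key (show 1 ≤ 31 by norm_num) (α₄+1)
  norm_num at g3 g5 g29 g31
  -- strict upper bounds
  have l3 : 2 * (∑ i ∈ range (α₁+1), 3^i) < 3^(α₁+1) := by omega
  have l5 : 4 * (∑ i ∈ range (α₂+1), 5^i) < 5^(α₂+1) := by omega
  have l29 : 28 * (∑ i ∈ range (α₃+1), 29^i) < 29^(α₃+1) := by omega
  have l31 : 30 * (∑ i ∈ range (α₄+1), 31^i) < 31^(α₄+1) := by omega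
  -- auxiliary products
  have hX1 : 0 < d * k := Nat.mul_pos hd0 (by omega)
  have hdm : d * m + d = 2 * (d * k) := by
    have h : d * (2 * k) = d * (m + 1) := by rw [h2k]
    rw [Nat.mul_add, Nat.mul_one] at h
    linarith [h, (show d * (2 * k) = 2 * (d * k) from by ring)]
  have hWd : 841 * d ≤ d * k := by
    calc 841 * d = d * 841 := by ring
    _ ≤ d * k := Nat.mul_le_mul_left d hk841
  have hacase : α₁ = 2 ∨ α₁ = 4 ∨ 6 ≤ α₁ := by omega
  rcases hacase with ha | ha | ha6
  · -- α₁ = 2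
    subst ha
    rw [show (∑ i ∈ range (2+1), (3:ℕ)^i) = 13 from by decide] at hσdm
    have hbig : (4 * (∑ i ∈ range (α₂+1), 5^i)) * ((28 * (∑ i ∈ range (α₃+1), 29^i)) *
        (30 * (∑ i ∈ range (α₄+1), 31^i))) < 5^(α₂+1) * (29^(α₃+1) * 31^(α₄+1)) :=
      mul_lt_mul'' l5 (mul_lt_mul'' l29 l31 (Nat.zero_le _) (Nat.zero_le _))
        (Nat.zero_le _) (Nat.zero_le _)
    have hb2 := mul_lt_mul_of_pos_left hbig (show (0:ℕ) < 117 by norm_num)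
    have eL : 117 * ((4 * (∑ i ∈ range (α₂+1), 5^i)) * ((28 * (∑ i ∈ range (α₃+1), 29^i)) *
        (30 * (∑ i ∈ range (α₄+1), 31^i)))) =
        30240 * (13 * (∑ i ∈ range (α₂+1), 5^i) * (∑ i ∈ range (α₃+1), 29^i) *
          (∑ i ∈ range (α₄+1), 31^i)) := by ring
    have eR : 117 * (5^(α₂+1) * (29^(α₃+1) * 31^(α₄+1))) =
        58435 * (3^2 * 5^α₂ * 29^α₃ * 31^α₄) := by ring
    rw [eL, eR, hσdm, ← hn] at hb2
    -- hb2 : 30240 * (d * m) < 58435 * (d * k)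
    linarith [hb2, hdm, hWd, hd0]
  · -- α₁ = 4
    subst ha
    rw [show (∑ i ∈ range (4+1), (3:ℕ)^i) = 121 from by decide] at hσdm
    have hbig : (4 * (∑ i ∈ range (α₂+1), 5^i)) * ((28 * (∑ i ∈ range (α₃+1), 29^i)) *
        (30 * (∑ i ∈ range (α₄+1), 31^i))) < 5^(α₂+1) * (29^(α₃+1) * 31^(α₄+1)) :=
      mul_lt_mul'' l5 (mul_lt_mul'' l29 l31 (Nat.zero_le _) (Nat.zero_le _))
        (Nat.zero_le _) (Nat.zero_le _)
    have hb2 := mul_lt_mul_of_pos_left hbig (show (0:ℕ) < 9801 by norm_num)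
    have eL : 9801 * ((4 * (∑ i ∈ range (α₂+1), 5^i)) * ((28 * (∑ i ∈ range (α₃+1), 29^i)) *
        (30 * (∑ i ∈ range (α₄+1), 31^i)))) =
        272160 * (121 * (∑ i ∈ range (α₂+1), 5^i) * (∑ i ∈ range (α₃+1), 29^i) *
          (∑ i ∈ range (α₄+1), 31^i)) := by ring
    have eR : 9801 * (5^(α₂+1) * (29^(α₃+1) * 31^(α₄+1))) =
        543895 * (3^4 * 5^α₂ * 29^α₃ * 31^α₄) := by ring
    rw [eL, eR, hσdm, ← hn] at hb2
    linarith [hb2, hdm, hWd, hd0]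
  · have hbcase : α₂ = 2 ∨ 4 ≤ α₂ := by omega
    rcases hbcase with hb | hb4
    · -- α₂ = 2
      subst hb
      rw [show (∑ i ∈ range (2+1), (5:ℕ)^i) = 31 from by decide] at hσdm
      have hbig : (2 * (∑ i ∈ range (α₁+1), 3^i)) * ((28 * (∑ i ∈ range (α₃+1), 29^i)) *
          (30 * (∑ i ∈ range (α₄+1), 31^i))) < 3^(α₁+1) * (29^(α₃+1) * 31^(α₄+1)) :=
        mul_lt_mul'' l3 (mul_lt_mul'' l29 l31 (Nat.zero_le _) (Nat.zero_le _))
          (Nat.zero_le _) (Nat.zero_le _)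
      have hb2 := mul_lt_mul_of_pos_left hbig (show (0:ℕ) < 775 by norm_num)
      have eL : 775 * ((2 * (∑ i ∈ range (α₁+1), 3^i)) * ((28 * (∑ i ∈ range (α₃+1), 29^i)) *
          (30 * (∑ i ∈ range (α₄+1), 31^i)))) =
          42000 * ((∑ i ∈ range (α₁+1), 3^i) * 31 * (∑ i ∈ range (α₃+1), 29^i) *
            (∑ i ∈ range (α₄+1), 31^i)) := by ring
      have eR : 775 * (3^(α₁+1) * (29^(α₃+1) * 31^(α₄+1))) =
          83607 * (3^α₁ * 5^2 * 29^α₃ * 31^α₄) := by ring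
      rw [eL, eR, hσdm, ← hn] at hb2
      linarith [hb2, hdm, hWd, hd0]
    · -- α₁ ≥ 6, α₂ ≥ 4 : σ(n) ≥ 2n, contradiction
      have hT3 : (729:ℕ) ≤ 3^α₁ := by
        have := Nat.pow_le_pow_right (show 1 ≤ 3 by norm_num) ha6
        norm_num at this; exact this
      have hT5 : (625:ℕ) ≤ 5^α₂ := by
        have := Nat.pow_le_pow_right (show 1 ≤ 5 by norm_num) hb4
        norm_num at this; exact this
      have hT29 : (841:ℕ) ≤ 29^α₃ := by
        have := Nat.pow_le_pow_right (show 1 ≤ 29 by norm_num) (show 2 ≤ α₃ by omega)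
        norm_num at this; exact this
      have hT31 : (961:ℕ) ≤ 31^α₄ := by
        have := Nat.pow_le_pow_right (show 1 ≤ 31 by norm_num) (show 2 ≤ α₄ by omega)
        norm_num at this; exact this
      rw [pow_succ] at g3 g5 g29 g31
      have hA : 2186 * 3^α₁ ≤ 1458 * (∑ i ∈ range (α₁+1), 3^i) := by omega
      have hB : 3124 * 5^α₂ ≤ 2500 * (∑ i ∈ range (α₂+1), 5^i) := by omega
      have hC : 24388 * 29^α₃ ≤ 23548 * (∑ i ∈ range (α₃+1), 29^i) := by omega
      have hE : 29790 * 31^α₄ ≤ 28830 * (∑ i ∈ range (α₄+1), 31^i) := by omega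
      have m3 := Nat.mul_le_mul (Nat.mul_le_mul (Nat.mul_le_mul hA hB) hC) hE
      have eL : (1458 * (∑ i ∈ range (α₁+1), 3^i)) * (2500 * (∑ i ∈ range (α₂+1), 5^i)) *
          (23548 * (∑ i ∈ range (α₃+1), 29^i)) * (28830 * (∑ i ∈ range (α₄+1), 31^i)) =
          2474549821800000 * ((∑ i ∈ range (α₁+1), 3^i) * (∑ i ∈ range (α₂+1), 5^i) *
            (∑ i ∈ range (α₃+1), 29^i) * (∑ i ∈ range (α₄+1), 31^i)) := by ring
      have eR : (2186 * 3^α₁) * (3124 * 5^α₂) * (24388 * 29^α₃) * (29790 * 31^α₄) =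
          4961441470265280 * (3^α₁ * 5^α₂ * 29^α₃ * 31^α₄) := by ring
      rw [eL, eR, hσdm, ← hn] at m3
      -- m3 : 4961441470265280 * (d * k) ≤ 2474549821800000 * (d * m)
      linarith [m3, hdm, hX1, hd0]
lemma arithP108 (p k m : ℤ) (hp : 109 ≤ p) (hk : 25 ≤ k) (hm : 2*k = m+1)
    (h : 224*(p-1)*m < 435*p*k) : False := by
  nlinarith [mul_nonneg (show (0:ℤ) ≤ p-109 by linarith) (show (0:ℤ) ≤ 13*k-224 by linarith)]

set_option maxHeartbeats 1000000 in
theorem stmt6 (p : ℕ) (hp : p.Prime) (hpq : 29 < p)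
    (α₁ α₂ α₃ α₄ : ℕ) (hα₁ : 0 < α₁) (hα₂ : 0 < α₂) (hα₃ : 0 < α₃) (hα₄ : 0 < α₄)
    (n : ℕ) (hn : n = 3 ^ α₁ * 5 ^ α₂ * 29 ^ α₃ * p ^ α₄)
    (hodd : Odd n)
    (d : ℕ) (hdvd : d ∣ n) (hlt : d < n)
    (hσ : ArithmeticFunction.sigma 1 n = 2 * n - d)
    (hD : 25 ≤ n / d) :
    False := by
  obtain ⟨k, hk⟩ := hdvd
  have hn0 : 0 < n := by rw [hn]; positivity
  have hd0 : 0 < d := by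
    rcases Nat.eq_zero_or_pos d with rfl | h
    · simp at hk; omega
    · exact h
  have hkD : 25 ≤ k := by
    have hq : n / d = k := by rw [hk]; exact Nat.mul_div_cancel_left k hd0
    omega
  have hσ2 : ArithmeticFunction.sigma 1 n + d = 2 * n := by omega
  have hnodd : n % 2 = 1 := Nat.odd_iff.1 hodd
  have hdodd : d % 2 = 1 := by
    by_contra h
    have h2 : 2 ∣ d := by omega
    have : 2 ∣ n := h2.trans ⟨k, hk⟩
    omega
  have hσodd : ArithmeticFunction.sigma 1 n % 2 = 1 := by omega
  have hpne3 : p ≠ 3 := by omega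
  have hpne5 : p ≠ 5 := by omega
  have hpne29 : p ≠ 29 := by omega
  have hp3 : Nat.Prime 3 := by norm_num
  have hp5 : Nat.Prime 5 := by norm_num
  have hp29 : Nat.Prime 29 := by norm_num
  have cop3 : Nat.Coprime (3 ^ α₁) (5 ^ α₂) :=
    Nat.Coprime.pow _ _ ((Nat.coprime_primes hp3 hp5).2 (by norm_num))
  have cop2 : Nat.Coprime (3 ^ α₁ * 5 ^ α₂) (29 ^ α₃) :=
    Nat.Coprime.mul (Nat.Coprime.pow _ _ ((Nat.coprime_primes hp3 hp29).2 (by norm_num)))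
      (Nat.Coprime.pow _ _ ((Nat.coprime_primes hp5 hp29).2 (by norm_num)))
  have cop1 : Nat.Coprime (3 ^ α₁ * 5 ^ α₂ * 29 ^ α₃) (p ^ α₄) :=
    Nat.Coprime.mul (Nat.Coprime.mul
      (Nat.Coprime.pow _ _ ((Nat.coprime_primes hp3 hp).2 (by omega)))
      (Nat.Coprime.pow _ _ ((Nat.coprime_primes hp5 hp).2 (by omega))))
      (Nat.Coprime.pow _ _ ((Nat.coprime_primes hp29 hp).2 (by omega)))
  have hσsplit : ArithmeticFunction.sigma 1 n =
      (∑ i ∈ Finset.range (α₁+1), 3^i) * (∑ i ∈ Finset.range (α₂+1), 5^i) *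
      (∑ i ∈ Finset.range (α₃+1), 29^i) * (∑ i ∈ Finset.range (α₄+1), p^i) := by
    rw [hn, ArithmeticFunction.isMultiplicative_sigma.map_mul_of_coprime cop1,
        ArithmeticFunction.isMultiplicative_sigma.map_mul_of_coprime cop2,
        ArithmeticFunction.isMultiplicative_sigma.map_mul_of_coprime cop3,
        ArithmeticFunction.sigma_one_apply_prime_pow hp3,
        ArithmeticFunction.sigma_one_apply_prime_pow hp5,
        ArithmeticFunction.sigma_one_apply_prime_pow hp29,
        ArithmeticFunction.sigma_one_apply_prime_pow hp]
  have hpodd : p % 2 = 1 := by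
    rcases hp.eq_two_or_odd with h | h
    · omega
    · exact h
  have hprododd : ((∑ i ∈ Finset.range (α₁+1), 3^i) * (∑ i ∈ Finset.range (α₂+1), 5^i) *
      (∑ i ∈ Finset.range (α₃+1), 29^i) * (∑ i ∈ Finset.range (α₄+1), p^i)) % 2 = 1 := by
    rw [← hσsplit]; exact hσodd
  have hoddsplit := Nat.odd_iff.2 hprododd
  rw [Nat.odd_mul, Nat.odd_mul, Nat.odd_mul] at hoddsplit
  obtain ⟨⟨⟨hAo, hBo⟩, hCo⟩, hEo⟩ := hoddsplit
  have he₁ : α₁ % 2 = 0 := by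
    have h := geom_parity (show (3:ℕ) % 2 = 1 by norm_num) (α₁+1)
    have h' := Nat.odd_iff.1 hAo
    omega
  have he₂ : α₂ % 2 = 0 := by
    have h := geom_parity (show (5:ℕ) % 2 = 1 by norm_num) (α₂+1)
    have h' := Nat.odd_iff.1 hBo
    omega
  have he₃ : α₃ % 2 = 0 := by
    have h := geom_parity (show (29:ℕ) % 2 = 1 by norm_num) (α₃+1)
    have h' := Nat.odd_iff.1 hCo
    omega
  have he₄ : α₄ % 2 = 0 := by
    have h := geom_parity hpodd (α₄+1)
    have h' := Nat.odd_iff.1 hEo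
    omega
  obtain ⟨m, h2k⟩ : ∃ m, 2 * k = m + 1 := ⟨2*k - 1, by omega⟩
  have hdkn : d * k = 3 ^ α₁ * 5 ^ α₂ * 29 ^ α₃ * p ^ α₄ := hk.symm.trans hn
  have hσdm : (∑ i ∈ Finset.range (α₁+1), 3^i) * (∑ i ∈ Finset.range (α₂+1), 5^i) *
      (∑ i ∈ Finset.range (α₃+1), 29^i) * (∑ i ∈ Finset.range (α₄+1), p^i) = d * m := by
    have hb : 2 * (d * k) = d * m + d := by
      calc 2 * (d * k) = d * (2 * k) := by ring
        _ = d * (m + 1) := by rw [h2k]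
        _ = d * m + d := by ring
    have h2n : 2 * n = d * m + d := by rw [hk]; exact hb
    omega
  -- master inequality
  have g3 := geom_key (show 1 ≤ 3 by norm_num) (α₁+1)
  have g5 := geom_key (show 1 ≤ 5 by norm_num) (α₂+1)
  have g29 := geom_key (show 1 ≤ 29 by norm_num) (α₃+1)
  have gp := geom_key (show 1 ≤ p by omega) (α₄+1)
  norm_num at g3 g5 g29
  have l3 : 2 * (∑ i ∈ Finset.range (α₁+1), 3^i) < 3^(α₁+1) := by omega
  have l5 : 4 * (∑ i ∈ Finset.range (α₂+1), 5^i) < 5^(α₂+1) := by omega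
  have l29 : 28 * (∑ i ∈ Finset.range (α₃+1), 29^i) < 29^(α₃+1) := by omega
  have lp : (p-1) * (∑ i ∈ Finset.range (α₄+1), p^i) < p^(α₄+1) := by omega
  have hbig := mul_lt_mul'' (mul_lt_mul'' (mul_lt_mul'' l3 l5 (Nat.zero_le _) (Nat.zero_le _))
    l29 (Nat.zero_le _) (Nat.zero_le _)) lp (Nat.zero_le _) (Nat.zero_le _)
  have eL : (2 * (∑ i ∈ Finset.range (α₁+1), 3^i)) * (4 * (∑ i ∈ Finset.range (α₂+1), 5^i)) *
      (28 * (∑ i ∈ Finset.range (α₃+1), 29^i)) * ((p-1) * (∑ i ∈ Finset.range (α₄+1), p^i)) =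
      224 * (p-1) * ((∑ i ∈ Finset.range (α₁+1), 3^i) * (∑ i ∈ Finset.range (α₂+1), 5^i) *
      (∑ i ∈ Finset.range (α₃+1), 29^i) * (∑ i ∈ Finset.range (α₄+1), p^i)) := by ring
  have eR : 3^(α₁+1) * 5^(α₂+1) * 29^(α₃+1) * p^(α₄+1) =
      435 * p * (3 ^ α₁ * 5 ^ α₂ * 29 ^ α₃ * p ^ α₄) := by ring
  rw [eL, eR, hσdm, ← hdkn] at hbig
  have hmaster : 224 * (p-1) * m < 435 * p * k := by
    have e1 : 224 * (p-1) * (d * m) = d * (224 * (p-1) * m) := by ring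
    have e2 : 435 * p * (d * k) = d * (435 * p * k) := by ring
    rw [e1, e2] at hbig
    exact lt_of_mul_lt_mul_left hbig (Nat.zero_le d)
  have hp108 : p ≤ 108 := by
    by_contra hcon
    push_neg at hcon
    have hmz : (224:ℤ) * ((p:ℤ)-1) * (m:ℤ) < 435 * (p:ℤ) * (k:ℤ) := by
      have := hmaster
      zify [show 1 ≤ p by omega] at this
      exact this
    exact arithP108 p k m (by exact_mod_cast hcon) (by exact_mod_cast hkD)
      (by exact_mod_cast h2k) hmz
  have hplist : p = 31 ∨ p = 37 ∨ p = 41 ∨ p = 43 ∨ p = 47 ∨ p = 53 ∨ p = 59 ∨ p = 61 ∨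
      p = 67 ∨ p = 71 ∨ p = 73 ∨ p = 79 ∨ p = 83 ∨ p = 89 ∨ p = 97 ∨ p = 101 ∨ p = 103 ∨
      p = 107 := by
    interval_cases p <;> first | omega | exact absurd hp (by norm_num)
  rcases hplist with rfl|rfl|rfl|rfl|rfl|rfl|rfl|rfl|rfl|rfl|rfl|rfl|rfl|rfl|rfl|rfl|rfl|rfl
  · exact auxD he₁ he₂ he₃ he₄ hα₁ hα₂ hα₃ hα₄ hd0 hdkn hσdm h2k hkD
  · exact auxB hp (by norm_num) (by norm_num) (by norm_num) he₁ he₂ he₃ he₄ hα₁ hα₂ hα₃ hα₄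
      hd0 hdkn hσdm h2k hkD hmaster
      (not_dvd_geom (N:=29) (q:=37) (T:=28) (by norm_num) (by decide) (by norm_num)
        (by norm_num) (by decide) he₄)
  · exact auxA hp (by norm_num) (by norm_num) (by norm_num) (by norm_num) he₁ he₂ he₃ he₄
      hα₁ hα₂ hα₃ hα₄ hd0 hdkn hσdm h2k hkD hmaster
  · exact auxB hp (by norm_num) (by norm_num) (by norm_num) he₁ he₂ he₃ he₄ hα₁ hα₂ hα₃ hα₄
      hd0 hdkn hσdm h2k hkD hmaster
      (not_dvd_geom (N:=29) (q:=43) (T:=28) (by norm_num) (by decide) (by norm_num)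
        (by norm_num) (by decide) he₄)
  · exact auxA hp (by norm_num) (by norm_num) (by norm_num) (by norm_num) he₁ he₂ he₃ he₄
      hα₁ hα₂ hα₃ hα₄ hd0 hdkn hσdm h2k hkD hmaster
  · exact auxA hp (by norm_num) (by norm_num) (by norm_num) (by norm_num) he₁ he₂ he₃ he₄
      hα₁ hα₂ hα₃ hα₄ hd0 hdkn hσdm h2k hkD hmaster
  · exact auxA hp (by norm_num) (by norm_num) (by norm_num) (by norm_num) he₁ he₂ he₃ he₄
      hα₁ hα₂ hα₃ hα₄ hd0 hdkn hσdm h2k hkD hmaster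
  · exact auxB hp (by norm_num) (by norm_num) (by norm_num) he₁ he₂ he₃ he₄ hα₁ hα₂ hα₃ hα₄
      hd0 hdkn hσdm h2k hkD hmaster
      (not_dvd_geom (N:=29) (q:=61) (T:=28) (by norm_num) (by decide) (by norm_num)
        (by norm_num) (by decide) he₄)
  · exact auxB hp (by norm_num) (by norm_num) (by norm_num) he₁ he₂ he₃ he₄ hα₁ hα₂ hα₃ hα₄
      hd0 hdkn hσdm h2k hkD hmaster
      (not_dvd_geom (N:=29) (q:=67) (T:=28) (by norm_num) (by decide) (by norm_num)
        (by norm_num) (by decide) he₄)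
  · exact auxA hp (by norm_num) (by norm_num) (by norm_num) (by norm_num) he₁ he₂ he₃ he₄
      hα₁ hα₂ hα₃ hα₄ hd0 hdkn hσdm h2k hkD hmaster
  · exact auxB hp (by norm_num) (by norm_num) (by norm_num) he₁ he₂ he₃ he₄ hα₁ hα₂ hα₃ hα₄
      hd0 hdkn hσdm h2k hkD hmaster
      (not_dvd_geom (N:=29) (q:=73) (T:=28) (by norm_num) (by decide) (by norm_num)
        (by norm_num) (by decide) he₄)
  · exact auxB hp (by norm_num) (by norm_num) (by norm_num) he₁ he₂ he₃ he₄ hα₁ hα₂ hα₃ hα₄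
      hd0 hdkn hσdm h2k hkD hmaster
      (not_dvd_geom (N:=29) (q:=79) (T:=28) (by norm_num) (by decide) (by norm_num)
        (by norm_num) (by decide) he₄)
  · exact auxA hp (by norm_num) (by norm_num) (by norm_num) (by norm_num) he₁ he₂ he₃ he₄
      hα₁ hα₂ hα₃ hα₄ hd0 hdkn hσdm h2k hkD hmaster
  · exact auxA hp (by norm_num) (by norm_num) (by norm_num) (by norm_num) he₁ he₂ he₃ he₄
      hα₁ hα₂ hα₃ hα₄ hd0 hdkn hσdm h2k hkD hmaster
  · exact auxB hp (by norm_num) (by norm_num) (by norm_num) he₁ he₂ he₃ he₄ hα₁ hα₂ hα₃ hα₄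
      hd0 hdkn hσdm h2k hkD hmaster
      (not_dvd_geom (N:=29) (q:=97) (T:=28) (by norm_num) (by decide) (by norm_num)
        (by norm_num) (by decide) he₄)
  · exact auxA hp (by norm_num) (by norm_num) (by norm_num) (by norm_num) he₁ he₂ he₃ he₄
      hα₁ hα₂ hα₃ hα₄ hd0 hdkn hσdm h2k hkD hmaster
  · exact auxC he₁ he₂ he₃ he₄ hα₁ hα₂ hα₃ hα₄ hd0 hdkn hσdm h2k hkD hmaster
  · exact auxA hp (by norm_num) (by norm_num) (by norm_num) (by norm_num) he₁ he₂ he₃ he₄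
      hα₁ hα₂ hα₃ hα₄ hd0 hdkn hσdm h2k hkD hmaster
end

section
/- There is no odd deficient-perfect number of the form n = 3^{α1} · 5^{α2} · 37^{α3} · p^{α4} with deficient divisor d satisfying n/d ≥ 15, where p is a prime with p > 37 and α1, α2, α3, α4 are positive integers. That is, no such n admits a proper divisor d with σ(n) = 2n - d and n/d ≥ 15. -/
lemma sigma_geom {q : ℕ} (hq : q.Prime) (k : ℕ) :
    (q - 1) * ArithmeticFunction.sigma 1 (q ^ k) = q ^ (k + 1) - 1 := by
  rw [ArithmeticFunction.sigma_one_apply_prime_pow hq]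
  induction k with
  | zero => simp
  | succ k ih =>
    rw [Finset.sum_range_succ, Nat.mul_add, ih]
    have h1 : 1 ≤ q ^ (k + 1) := Nat.one_le_pow _ _ hq.pos
    have h2 : q ^ (k + 1 + 1) = q * q ^ (k + 1) := by ring
    have h3 : (q - 1) * q ^ (k + 1) = q * q ^ (k + 1) - q ^ (k + 1) := by
      rw [Nat.sub_mul, one_mul]
    have h4 : q ^ (k + 1) ≤ q * q ^ (k + 1) := Nat.le_mul_of_pos_left _ hq.pos
    omega

lemma zmod_pow3_eq_one_iff {r : ℕ} [NeZero r] (M : ℕ) :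
    (3 : ZMod r) ^ M = 1 ↔ r ∣ 3 ^ M - 1 := by
  have h2 : (1:ℕ) ≤ 3 ^ M := Nat.one_le_pow _ _ (by norm_num)
  rw [← ZMod.natCast_eq_zero_iff, Nat.cast_sub h2]
  push_cast
  constructor
  · intro h; rw [h]; ring
  · intro h; have := sub_eq_zero.mp h; simpa using this

lemma kill (r : ℕ) [NeZero r] (v u M : ℕ) (hM : Odd M) (hdvd : r ∣ 3 ^ M - 1)
    (hful : (3 : ZMod r) ^ (2 ^ v * u) = 1) (hne : (3 : ZMod r) ^ u ≠ 1) : False := by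
  have h1 : (3 : ZMod r) ^ M = 1 := (zmod_pow3_eq_one_iff M).mpr hdvd
  set o := orderOf (3 : ZMod r) with ho
  have ho1 : o ∣ M := orderOf_dvd_of_pow_eq_one h1
  have ho2 : o ∣ 2 ^ v * u := orderOf_dvd_of_pow_eq_one hful
  have hoodd : Odd o := by
    rcases Nat.even_or_odd o with he | h
    · exfalso
      obtain ⟨w, hw⟩ := he
      have h2 : (2:ℕ) ∣ M := dvd_trans ⟨w, by omega⟩ ho1
      rw [Nat.odd_iff] at hM
      omega
    · exact h
  have ho3 : o ∣ u := Nat.Coprime.dvd_of_dvd_mul_left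
    (Nat.Coprime.pow_right _ (Nat.coprime_two_right.mpr hoodd)) ho2
  exact hne (orderOf_dvd_iff_pow_eq_one.mp ho3)

set_option maxHeartbeats 1000000 in
lemma wief {p : ℕ} (hp : p.Prime) (hlow : 38 ≤ p) (hhigh : p ≤ 309)
    (h : p ^ 2 ∣ 3 ^ (p - 1) - 1) : False := by
  rw [show 3 ^ (p - 1) = (3 ^ ((p - 1) / 2)) ^ 2 * 3 ^ ((p - 1) % 2) by
    rw [← pow_mul, ← pow_add]; congr 1; omega] at h
  interval_cases p <;> norm_num at h

set_option maxHeartbeats 2000000 in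
theorem stmt8 (p : ℕ) (hp : p.Prime) (hpq : 37 < p)
    (α₁ α₂ α₃ α₄ : ℕ) (hα₁ : 0 < α₁) (hα₂ : 0 < α₂) (hα₃ : 0 < α₃) (hα₄ : 0 < α₄)
    (n : ℕ) (hn : n = 3 ^ α₁ * 5 ^ α₂ * 37 ^ α₃ * p ^ α₄)
    (hodd : Odd n)
    (d : ℕ) (hdvd : d ∣ n) (hlt : d < n)
    (hσ : ArithmeticFunction.sigma 1 n = 2 * n - d)
    (hD : 15 ≤ n / d) :
    False := by
  have hp3 : Nat.Prime 3 := by norm_num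
  have hp5 : Nat.Prime 5 := by norm_num
  have hp37 : Nat.Prime 37 := by norm_num
  have hp41 : 41 ≤ p := by
    by_contra hcon
    push_neg at hcon
    interval_cases p <;> norm_num at hp
  have hA1 : 1 ≤ 3 ^ α₁ := Nat.one_le_pow _ _ (by norm_num)
  have hB1 : 1 ≤ 5 ^ α₂ := Nat.one_le_pow _ _ (by norm_num)
  have hC1 : 1 ≤ 37 ^ α₃ := Nat.one_le_pow _ _ (by norm_num)
  have hE1 : 1 ≤ p ^ α₄ := Nat.one_le_pow _ _ (by omega)
  have hn1 : 1 ≤ n := by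
    have : 0 < n := by rw [hn]; positivity
    omega
  have hd1 : 1 ≤ d := Nat.pos_of_dvd_of_pos hdvd (by omega)
  obtain ⟨D, hnD⟩ : ∃ D, n = d * D := ⟨n / d, (Nat.mul_div_cancel' hdvd).symm⟩
  have h15d : 15 * d ≤ n := (Nat.le_div_iff_mul_le (by omega)).mp hD
  have hD15 : 15 ≤ D := by
    have h' : d * 15 ≤ d * D := by rw [← hnD]; linarith [h15d]
    exact Nat.le_of_mul_le_mul_left h' (by omega)
  have hDdvd : D ∣ n := ⟨d, by rw [hnD, mul_comm]⟩
  -- odd divisor helper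
  have hodd_of_dvd : ∀ x y : ℕ, x ∣ y → Odd y → Odd x := by
    intro x y hxy hy
    rcases Nat.even_or_odd x with he | h
    · exfalso
      obtain ⟨c, hc⟩ := hxy
      rw [hc] at hy
      exact (Nat.not_odd_iff_even.mpr (he.mul_right c)) hy
    · exact h
  -- key equation
  have e1 : ArithmeticFunction.sigma 1 n * D = 2 * n * D - d * D := by
    rw [hσ, Nat.sub_mul]
  have e3 : (2 * D - 1) * n = 2 * D * n - n := by rw [Nat.sub_mul, one_mul]
  have e4 : 2 * n * D = 2 * D * n := by ring
  have e2 : d * D = n := hnD.symm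
  have keyN : (2 * D - 1) * n = ArithmeticFunction.sigma 1 n * D := by omega
  have hσ_dvd : ArithmeticFunction.sigma 1 n ∣ (2 * D - 1) * n := ⟨D, keyN⟩
  -- multiplicative split
  have hco3 : Nat.Coprime (37 ^ α₃) (p ^ α₄) :=
    Nat.Coprime.pow _ _ ((Nat.coprime_primes hp37 hp).mpr (by omega))
  have hco2 : Nat.Coprime (5 ^ α₂) (37 ^ α₃ * p ^ α₄) :=
    Nat.Coprime.mul_right (Nat.Coprime.pow _ _ ((Nat.coprime_primes hp5 hp37).mpr (by norm_num)))
      (Nat.Coprime.pow _ _ ((Nat.coprime_primes hp5 hp).mpr (by omega)))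
  have hco1 : Nat.Coprime (3 ^ α₁) (5 ^ α₂ * (37 ^ α₃ * p ^ α₄)) :=
    Nat.Coprime.mul_right (Nat.Coprime.pow _ _ ((Nat.coprime_primes hp3 hp5).mpr (by norm_num)))
      (Nat.Coprime.mul_right
        (Nat.Coprime.pow _ _ ((Nat.coprime_primes hp3 hp37).mpr (by norm_num)))
        (Nat.Coprime.pow _ _ ((Nat.coprime_primes hp3 hp).mpr (by omega))))
  have hsplit : ArithmeticFunction.sigma 1 n =
      ArithmeticFunction.sigma 1 (3 ^ α₁) * (ArithmeticFunction.sigma 1 (5 ^ α₂) *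
        (ArithmeticFunction.sigma 1 (37 ^ α₃) * ArithmeticFunction.sigma 1 (p ^ α₄))) := by
    rw [hn, show (3:ℕ) ^ α₁ * 5 ^ α₂ * 37 ^ α₃ * p ^ α₄
        = 3 ^ α₁ * (5 ^ α₂ * (37 ^ α₃ * p ^ α₄)) by ring,
      ArithmeticFunction.isMultiplicative_sigma.map_mul_of_coprime hco1,
      ArithmeticFunction.isMultiplicative_sigma.map_mul_of_coprime hco2,
      ArithmeticFunction.isMultiplicative_sigma.map_mul_of_coprime hco3]
  -- geometric formulas
  have g3 : 2 * ArithmeticFunction.sigma 1 (3 ^ α₁) = 3 ^ (α₁ + 1) - 1 := by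
    have := sigma_geom hp3 α₁; norm_num at this; exact this
  have g5 : 4 * ArithmeticFunction.sigma 1 (5 ^ α₂) = 5 ^ (α₂ + 1) - 1 := by
    have := sigma_geom hp5 α₂; norm_num at this; exact this
  have g37 : 36 * ArithmeticFunction.sigma 1 (37 ^ α₃) = 37 ^ (α₃ + 1) - 1 := by
    have := sigma_geom hp37 α₃; norm_num at this; exact this
  have gp : (p - 1) * ArithmeticFunction.sigma 1 (p ^ α₄) = p ^ (α₄ + 1) - 1 :=
    sigma_geom hp α₄
  -- strict bounds
  have pow3 : 3 ^ (α₁ + 1) = 3 * 3 ^ α₁ := by ring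
  have pow5 : 5 ^ (α₂ + 1) = 5 * 5 ^ α₂ := by ring
  have pow37 : 37 ^ (α₃ + 1) = 37 * 37 ^ α₃ := by ring
  have powp : p ^ (α₄ + 1) = p * p ^ α₄ := by ring
  have t3 : 2 * ArithmeticFunction.sigma 1 (3 ^ α₁) < 3 * 3 ^ α₁ := by omega
  have t5 : 4 * ArithmeticFunction.sigma 1 (5 ^ α₂) < 5 * 5 ^ α₂ := by omega
  have t37 : 36 * ArithmeticFunction.sigma 1 (37 ^ α₃) < 37 * 37 ^ α₃ := by omega
  have tp : (p - 1) * ArithmeticFunction.sigma 1 (p ^ α₄) < p * p ^ α₄ := by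
    have hpp : 1 ≤ p ^ (α₄ + 1) := Nat.one_le_pow _ _ (by omega)
    omega
  have m1 := mul_lt_mul'' t3 t5 (Nat.zero_le _) (Nat.zero_le _)
  have m2 := mul_lt_mul'' m1 t37 (Nat.zero_le _) (Nat.zero_le _)
  have m3 := mul_lt_mul'' m2 tp (Nat.zero_le _) (Nat.zero_le _)
  have hmain : 288 * ((p - 1) * ArithmeticFunction.sigma 1 n) < 555 * (p * n) := by
    calc 288 * ((p - 1) * ArithmeticFunction.sigma 1 n)
        = 2 * ArithmeticFunction.sigma 1 (3 ^ α₁) * (4 * ArithmeticFunction.sigma 1 (5 ^ α₂)) *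
            (36 * ArithmeticFunction.sigma 1 (37 ^ α₃)) *
            ((p - 1) * ArithmeticFunction.sigma 1 (p ^ α₄)) := by rw [hsplit]; ring
      _ < 3 * 3 ^ α₁ * (5 * 5 ^ α₂) * (37 * 37 ^ α₃) * (p * p ^ α₄) := m3
      _ = 555 * (p * n) := by rw [hn]; ring
  have hS29 : 29 * n ≤ 15 * ArithmeticFunction.sigma 1 n := by omega
  have hSpos : 1 ≤ ArithmeticFunction.sigma 1 n := by omega
  -- p ≤ 309
  have hp309 : p ≤ 309 := by
    by_contra hcon
    push_neg at hcon
    have F1 : (288:ℤ) * (((p:ℤ) - 1) * (ArithmeticFunction.sigma 1 n : ℤ)) <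
        555 * ((p:ℤ) * (n:ℤ)) := by
      have := hmain
      zify [show 1 ≤ p by omega] at this
      exact_mod_cast this
    have h29 : (29:ℤ) * (n:ℤ) ≤ 15 * (ArithmeticFunction.sigma 1 n : ℤ) := by exact_mod_cast hS29
    have h1 : (p:ℤ) * ((29:ℤ) * n) ≤ (p:ℤ) * (15 * (ArithmeticFunction.sigma 1 n : ℤ)) :=
      mul_le_mul_of_nonneg_left h29 (by positivity)
    have h2 : (0:ℤ) ≤ (ArithmeticFunction.sigma 1 n : ℤ) * ((p:ℤ) - 310) :=
      mul_nonneg (by positivity) (by omega)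
    have hS1 : (1:ℤ) ≤ (ArithmeticFunction.sigma 1 n : ℤ) := by exact_mod_cast hSpos
    linarith [F1, h1, h2, hS1]
  -- D ≤ 40
  have hD40 : D ≤ 40 := by
    by_contra hcon
    push_neg at hcon
    have F1 : (288:ℤ) * (((p:ℤ) - 1) * (ArithmeticFunction.sigma 1 n : ℤ)) <
        555 * ((p:ℤ) * (n:ℤ)) := by
      have := hmain
      zify [show 1 ≤ p by omega] at this
      exact_mod_cast this
    have keyZ : ((2:ℤ) * D - 1) * n = (ArithmeticFunction.sigma 1 n : ℤ) * D := by
      have := keyN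
      zify [show 1 ≤ 2 * D by omega] at this
      exact_mod_cast this
    have hx41 : (41:ℤ) ≤ (p:ℤ) := by exact_mod_cast hp41
    have hS0 : (0:ℤ) ≤ (ArithmeticFunction.sigma 1 n : ℤ) := by positivity
    have hN0 : (0:ℤ) ≤ (n:ℤ) := by positivity
    have hx0 : (0:ℤ) < (p:ℤ) := by positivity
    have P1 : (0:ℤ) ≤ (ArithmeticFunction.sigma 1 n : ℤ) * ((p:ℤ) - 41) :=
      mul_nonneg hS0 (sub_nonneg.mpr hx41)
    have c3 : (p:ℤ) * (11520 * (ArithmeticFunction.sigma 1 n : ℤ)) <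
        (p:ℤ) * (22755 * (n:ℤ)) := by linarith [P1, F1]
    have hstep : (11520:ℤ) * (ArithmeticFunction.sigma 1 n : ℤ) < 22755 * (n:ℤ) :=
      lt_of_mul_lt_mul_left c3 (le_of_lt hx0)
    have hDZ : (41:ℤ) ≤ (D:ℤ) := by exact_mod_cast hcon
    have h1 : (D:ℤ) * ((11520:ℤ) * (ArithmeticFunction.sigma 1 n : ℤ)) <
        (D:ℤ) * (22755 * (n:ℤ)) :=
      mul_lt_mul_of_pos_left hstep (by exact_mod_cast (by omega : 0 < D))
    have h2 : (41:ℤ) * (n:ℤ) ≤ (D:ℤ) * (n:ℤ) := mul_le_mul_of_nonneg_right hDZ hN0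
    have hN1 : (1:ℤ) ≤ (n:ℤ) := by exact_mod_cast hn1
    linarith [keyZ, h1, h2, hN1]
  -- parity: α₁ even
  have hσodd : Odd (ArithmeticFunction.sigma 1 n) := by
    rw [hσ]
    exact Nat.Even.sub_odd (by omega) (even_two_mul n) (hodd_of_dvd d n hdvd hodd)
  have hs3dvd : ArithmeticFunction.sigma 1 (3 ^ α₁) ∣ ArithmeticFunction.sigma 1 n :=
    ⟨_, hsplit⟩
  have hs3odd : Odd (ArithmeticFunction.sigma 1 (3 ^ α₁)) :=
    hodd_of_dvd _ _ hs3dvd hσodd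
  have hα₁even : α₁ % 2 = 0 := by
    by_contra hcon
    obtain ⟨w, hw⟩ : ∃ w, α₁ + 1 = 2 * w := ⟨(α₁ + 1) / 2, by omega⟩
    have h8 : (8:ℕ) ∣ 9 ^ w - 1 := by simpa using Nat.sub_dvd_pow_sub_pow 9 1 w
    have h9 : 3 ^ (α₁ + 1) = 9 ^ w := by
      rw [hw, pow_mul]; norm_num
    obtain ⟨z, hz⟩ := h8
    have h1a : 1 ≤ (9:ℕ) ^ w := Nat.one_le_pow _ _ (by norm_num)
    have hodd3 := Nat.odd_iff.mp hs3odd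
    omega
  have hModd : Odd (α₁ + 1) := by rw [Nat.odd_iff]; omega
  -- D ∈ {15,25,27,37}
  have hDodd := hodd_of_dvd D n hDdvd hodd
  have hq_of_dvd_n : ∀ q : ℕ, q.Prime → q ∣ n → q = 3 ∨ q = 5 ∨ q = 37 ∨ q = p := by
    intro q hq hqn
    rw [hn] at hqn
    rcases (Nat.Prime.dvd_mul hq).mp hqn with h1 | h4
    · rcases (Nat.Prime.dvd_mul hq).mp h1 with h2 | h3
      · rcases (Nat.Prime.dvd_mul hq).mp h2 with h2a | h2b
        · exact Or.inl ((Nat.prime_dvd_prime_iff_eq hq hp3).mp (hq.dvd_of_dvd_pow h2a))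
        · exact Or.inr (Or.inl ((Nat.prime_dvd_prime_iff_eq hq hp5).mp (hq.dvd_of_dvd_pow h2b)))
      · exact Or.inr (Or.inr (Or.inl
          ((Nat.prime_dvd_prime_iff_eq hq hp37).mp (hq.dvd_of_dvd_pow h3))))
    · exact Or.inr (Or.inr (Or.inr
        ((Nat.prime_dvd_prime_iff_eq hq hp).mp (hq.dvd_of_dvd_pow h4))))
  have hDoddm := Nat.odd_iff.mp hDodd
  have hkillD : ∀ q : ℕ, q.Prime → q ∣ n → q = 3 ∨ q = 5 ∨ q = 37 ∨ 41 ≤ q := by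
    intro q hq hdv
    rcases hq_of_dvd_n q hq hdv with h | h | h | h <;> omega
  have hDval : D = 15 ∨ D = 25 ∨ D = 27 ∨ D = 37 := by
    interval_cases D
    · omega -- D = 15
    · omega -- D = 16
    · rcases hkillD 17 (by norm_num) hDdvd with h | h | h | h <;> omega
    · omega -- D = 18
    · rcases hkillD 19 (by norm_num) hDdvd with h | h | h | h <;> omega
    · omega -- D = 20
    · rcases hkillD 7 (by norm_num) (dvd_trans (by norm_num) hDdvd) with h | h | h | h <;> omega
    · omega -- D = 22
    · rcases hkillD 23 (by norm_num) hDdvd with h | h | h | h <;> omega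
    · omega -- D = 24
    · omega -- D = 25
    · omega -- D = 26
    · omega -- D = 27
    · omega -- D = 28
    · rcases hkillD 29 (by norm_num) hDdvd with h | h | h | h <;> omega
    · omega -- D = 30
    · rcases hkillD 31 (by norm_num) hDdvd with h | h | h | h <;> omega
    · omega -- D = 32
    · rcases hkillD 11 (by norm_num) (dvd_trans (by norm_num) hDdvd) with h | h | h | h <;> omega
    · omega -- D = 34
    · rcases hkillD 7 (by norm_num) (dvd_trans (by norm_num) hDdvd) with h | h | h | h <;> omega
    · omega -- D = 36
    · omega -- D = 37
    · omega -- D = 38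
    · rcases hkillD 13 (by norm_num) (dvd_trans (by norm_num) hDdvd) with h | h | h | h <;> omega
    · omega -- D = 40
  have h2D : 2 * D - 1 = 29 ∨ 2 * D - 1 = 49 ∨ 2 * D - 1 = 53 ∨ 2 * D - 1 = 73 := by
    rcases hDval with h | h | h | h <;> subst h <;> norm_num
  -- every prime factor of σ(3^α₁) is p
  have h1a3 : 1 ≤ 3 ^ (α₁ + 1) := Nat.one_le_pow _ _ (by norm_num)
  have huniq : ∀ q : ℕ, q.Prime → q ∣ ArithmeticFunction.sigma 1 (3 ^ α₁) → q = p := by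
    intro q hq hqs3
    have hq3M : q ∣ 3 ^ (α₁ + 1) - 1 := by
      have h2 : q ∣ 2 * ArithmeticFunction.sigma 1 (3 ^ α₁) := Dvd.dvd.mul_left hqs3 2
      rwa [g3] at h2
    have hqD : q ∣ (2 * D - 1) * n := dvd_trans (dvd_trans hqs3 hs3dvd) hσ_dvd
    rcases (Nat.Prime.dvd_mul hq).mp hqD with hq1 | hq2
    · exfalso
      rcases h2D with h | h | h | h <;> rw [h] at hq1
      · have hq29 : q = 29 := (Nat.prime_dvd_prime_iff_eq hq (by norm_num)).mp hq1
        subst hq29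
        exact kill 29 2 7 _ hModd hq3M (by decide) (by decide)
      · have h49 : q ∣ 7 ^ 2 := by norm_num [hq1]
        have hq7 : q = 7 := (Nat.prime_dvd_prime_iff_eq hq (by norm_num)).mp
          (hq.dvd_of_dvd_pow h49)
        subst hq7
        exact kill 7 1 3 _ hModd hq3M (by decide) (by decide)
      · have hq53 : q = 53 := (Nat.prime_dvd_prime_iff_eq hq (by norm_num)).mp hq1
        subst hq53
        exact kill 53 2 13 _ hModd hq3M (by decide) (by decide)
      · have hq73 : q = 73 := (Nat.prime_dvd_prime_iff_eq hq (by norm_num)).mp hq1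
        subst hq73
        exact kill 73 3 9 _ hModd hq3M (by decide) (by decide)
    · rcases hq_of_dvd_n q hq hq2 with h | h | h | h
      · exfalso
        subst h
        have h3d : (3:ℕ) ∣ 3 ^ (α₁ + 1) := dvd_pow_self 3 (by omega)
        obtain ⟨z1, hz1⟩ := hq3M
        obtain ⟨z2, hz2⟩ := h3d
        omega
      · exfalso; subst h
        exact kill 5 2 1 _ hModd hq3M (by decide) (by decide)
      · exfalso; subst h
        exact kill 37 2 9 _ hModd hq3M (by decide) (by decide)
      · exact h
  have hA27 : 27 ≤ 3 ^ (α₁ + 1) := by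
    calc (27:ℕ) = 3 ^ 3 := by norm_num
    _ ≤ 3 ^ (α₁ + 1) := Nat.pow_le_pow_right (by norm_num) (by omega)
  have hs3big : 13 ≤ ArithmeticFunction.sigma 1 (3 ^ α₁) := by omega
  have hs3pow := Nat.eq_prime_pow_of_unique_prime_dvd
    (show ArithmeticFunction.sigma 1 (3 ^ α₁) ≠ 0 by omega)
    (fun {q} hq hd => huniq q hq hd)
  set K := (ArithmeticFunction.sigma 1 (3 ^ α₁)).primeFactorsList.length with hKdef
  have hKne : K ≠ 0 := by
    intro h0
    rw [h0, pow_zero] at hs3pow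
    omega
  have hsub : 3 ^ (α₁ + 1) - 1 = 2 * p ^ K := by
    rw [hs3pow] at g3
    omega
  -- the order of 3 mod p
  haveI : Fact p.Prime := ⟨hp⟩
  haveI : NeZero p := ⟨by omega⟩
  have h3p0 : (3 : ZMod p) ≠ 0 := by
    intro h0
    have h1 : ((3:ℕ) : ZMod p) = 0 := by exact_mod_cast h0
    have h2 := (ZMod.natCast_eq_zero_iff 3 p).mp h1
    have := Nat.le_of_dvd (by norm_num) h2
    omega
  have hpdvd : p ∣ 3 ^ (α₁ + 1) - 1 := by
    rw [hsub]
    exact Dvd.dvd.mul_left (dvd_pow_self p hKne) 2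
  have hm1 : (3 : ZMod p) ^ (α₁ + 1) = 1 := (zmod_pow3_eq_one_iff _).mpr hpdvd
  obtain ⟨t, ht⟩ := orderOf_dvd_of_pow_eq_one hm1
  set m := orderOf (3 : ZMod p) with hmdef
  have hmp1 : m ∣ p - 1 := orderOf_dvd_of_pow_eq_one (ZMod.pow_card_sub_one_eq_one h3p0)
  have hpm : p ∣ 3 ^ m - 1 := (zmod_pow3_eq_one_iff m).mp (pow_orderOf_eq_one _)
  have hdvd1 : 3 ^ m - 1 ∣ 3 ^ (α₁ + 1) - 1 := by
    rw [ht, pow_mul]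
    simpa using Nat.sub_dvd_pow_sub_pow (3 ^ m) 1 t
  have hdvd2 : 3 ^ m - 1 ∣ 2 * p ^ K := by rw [← hsub]; exact hdvd1
  have h3modd : Odd ((3:ℕ) ^ m) := Odd.pow (by decide)
  obtain ⟨y, hy⟩ : ∃ y, 3 ^ m - 1 = 2 * y :=
    ⟨(3 ^ m - 1) / 2, by have := Nat.odd_iff.mp h3modd; omega⟩
  have hydvd : y ∣ p ^ K := by
    have h2 : 2 * y ∣ 2 * p ^ K := by rw [← hy]; exact hdvd2
    exact (mul_dvd_mul_iff_left (two_ne_zero)).mp h2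
  obtain ⟨j, hjK, hyj⟩ := (Nat.dvd_prime_pow hp).mp hydvd
  have hpy : p ∣ y := by
    have h2 : p ∣ 2 * y := by rw [← hy]; exact hpm
    rcases (Nat.Prime.dvd_mul hp).mp h2 with h | h
    · have := Nat.le_of_dvd (by norm_num) h; omega
    · exact h
  have hj1 : 1 ≤ j := by
    by_contra h0
    have : j = 0 := by omega
    rw [this, pow_zero] at hyj
    rw [hyj] at hpy
    have := Nat.le_of_dvd (by norm_num) hpy
    omega
  rcases eq_or_lt_of_le hj1 with hj | hj2
  · -- j = 1, so 3^m = 2p+1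
    have hy_p : y = p := by rw [hyj, ← hj, pow_one]
    have hm2p : 3 ^ m = 2 * p + 1 := by
      rw [hy_p] at hy
      have h1b : 1 ≤ (3:ℕ) ^ m := Nat.one_le_pow _ _ (by norm_num)
      omega
    have hm_eq5 : m = 5 := by
      by_contra hm5'
      rcases le_or_gt m 4 with h | h
      · have h4 : (3:ℕ) ^ m ≤ 3 ^ 4 := Nat.pow_le_pow_right (by norm_num) h
        norm_num at h4
        omega
      · have h6 : 6 ≤ m := by omega
        have h7 : (3:ℕ) ^ 6 ≤ 3 ^ m := Nat.pow_le_pow_right (by norm_num) h6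
        norm_num at h7
        omega
    rw [hm_eq5] at hm2p
    norm_num at hm2p
    have hp121 : p = 121 := by omega
    rw [hp121] at hp
    norm_num at hp
  · -- j ≥ 2 : Wieferich contradiction
    have hp2y : p ^ 2 ∣ y := by
      rw [hyj]
      exact pow_dvd_pow p hj2
    have hp2m : p ^ 2 ∣ 3 ^ m - 1 := by
      rw [hy]
      exact Dvd.dvd.mul_left hp2y 2
    obtain ⟨s, hs⟩ := hmp1
    have hfin : p ^ 2 ∣ 3 ^ (p - 1) - 1 := by
      refine dvd_trans hp2m ?_
      rw [hs, pow_mul]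
      simpa using Nat.sub_dvd_pow_sub_pow (3 ^ m) 1 s
    exact wief hp (by omega) hp309 hfin
end

section
/- There is no odd deficient-perfect number of the form n = 3^{α1} · 5^{α2} · q^{α3} · p^{α4}, where q and p are primes with 67 ≤ q ≤ 269 and p > q, and α1, α2, α3, α4 are positive integers. That is, no such n admits a proper divisor d with σ(n) = 2n - d. -/
open Finset

lemma dpn_geom_aux (y m : ℕ) : y * (∑ i ∈ range m, (y+1)^i) + 1 = (y+1)^m := by
  induction m with
  | zero => simp
  | succ k ih =>
    rw [sum_range_succ]
    calc y * ((∑ i ∈ range k, (y+1)^i) + (y+1)^k) + 1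
        = (y * (∑ i ∈ range k, (y+1)^i) + 1) + y * (y+1)^k := by ring
      _ = (y+1)^k + y * (y+1)^k := by rw [ih]
      _ = (y+1)^(k+1) := by ring

lemma dpn_geom_factor (x a k : ℕ) :
    ∑ i ∈ range (a*k), x^i = (∑ i ∈ range a, x^i) * (∑ j ∈ range k, (x^a)^j) := by
  induction k with
  | zero => simp
  | succ k ih =>
    rw [Nat.mul_succ, sum_range_add, ih, sum_range_succ]
    have h : ∑ i ∈ range a, x^(a*k + i) = (∑ i ∈ range a, x^i) * (x^a)^k := by
      rw [Finset.sum_mul]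
      apply Finset.sum_congr rfl
      intro i _
      rw [← pow_mul, ← pow_add]
      ring_nf
    rw [h]
    ring

lemma dpn_sum_zero_pow {R : Type*} [CommRing R] (m : ℕ) :
    ∑ i ∈ range (m+1), (0:R)^i = 1 := by
  rw [sum_range_succ']
  simp

lemma dpn_zmod5_sum {x : ZMod 5} {m : ℕ} (hm : Even m)
    (h : ∑ i ∈ range (m+1), x^i = 0) : x = 1 := by
  by_contra hx
  have hx0 : x ≠ 0 := by
    rintro rfl
    rw [dpn_sum_zero_pow] at h
    exact absurd h (by decide)
  have h1 : x ^ (m+1) = 1 := by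
    have hg := geom_sum_mul x (m+1)
    rw [h, zero_mul] at hg
    exact sub_eq_zero.mp hg.symm
  have h4 : x ^ 4 = 1 := by
    have : ∀ z : ZMod 5, z ≠ 0 → z^4 = 1 := by decide
    exact this x hx0
  have hd1 : orderOf x ∣ m+1 := orderOf_dvd_of_pow_eq_one h1
  have hd2 : orderOf x ∣ 4 := orderOf_dvd_of_pow_eq_one h4
  have hcop : Nat.gcd (m+1) 4 = 1 := by
    obtain ⟨k, rfl⟩ := hm
    have h2 : ¬ (2 ∣ (k + k + 1)) := by omega
    have hc : Nat.Coprime (k+k+1) 2 :=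
      (Nat.coprime_comm.mpr ((Nat.Prime.coprime_iff_not_dvd Nat.prime_two).mpr h2))
    have := Nat.Coprime.pow_right 2 hc
    simpa [Nat.Coprime] using this
  have : orderOf x ∣ 1 := hcop ▸ Nat.dvd_gcd hd1 hd2
  exact hx (orderOf_eq_one_iff.mp (Nat.dvd_one.mp this))

lemma dpn_parity (r m : ℕ) (hr : Odd r) (h : Odd (∑ i ∈ range (m+1), r^i)) : Even m := by
  have key : ∀ M : ℕ, (∑ i ∈ range M, r^i) % 2 = M % 2 := by
    intro M
    induction M with
    | zero => simp
    | succ k ih =>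
      rw [sum_range_succ]
      have hodd : r^k % 2 = 1 := Nat.odd_iff.mp (hr.pow)
      omega
  have h1 := key (m+1)
  rw [Nat.odd_iff] at h
  rw [Nat.even_iff]
  omega


lemma dpn_geom_auxX (x m : ℕ) (hx : 1 ≤ x) :
    (x-1) * (∑ i ∈ range m, x^i) + 1 = x^m := by
  obtain ⟨y, rfl⟩ : ∃ y, x = y + 1 := ⟨x-1, by omega⟩
  simpa using dpn_geom_aux y m

lemma d3' : ∀ x : ZMod 3, ∑ i ∈ range 5, x^i ≠ 0 := by decide
lemma d17' : ∀ x : ZMod 17, ∑ i ∈ range 5, x^i ≠ 0 := by decide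
lemma d25A : ∀ y : ZMod 25, ∑ i ∈ range 5, (1 + 5*y)^i = 5 := by decide
lemma d25B : ∀ y : ZMod 25, (1 + 5*y)^5 = 1 := by decide

lemma dpn_key (r u : ℕ) (hr : r.Prime) (hu : u.Prime) (hr67 : 67 ≤ r) (hu67 : 67 ≤ u)
    (m : ℕ) (hm : Even m)
    (h125 : 5^3 ∣ ∑ i ∈ range (m+1), r^i)
    (H : ∀ s : ℕ, s.Prime → s ∣ (∑ i ∈ range (m+1), r^i) →
        s = 3 ∨ s = 5 ∨ s = 17 ∨ s = r ∨ s = u) : False := by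
  haveI : Fact r.Prime := ⟨hr⟩
  haveI : Fact u.Prime := ⟨hu⟩
  haveI : Fact (1 < r) := ⟨hr.one_lt⟩
  haveI : NeZero u := ⟨by omega⟩
  haveI : NeZero r := ⟨by omega⟩
  set S := ∑ i ∈ range (m+1), r^i with hSdef
  -- r ≡ 1 mod 5
  have h5S : (5:ℕ) ∣ S := dvd_trans (by norm_num) h125
  have hcast5 : ((S : ℕ) : ZMod 5) = 0 := (ZMod.natCast_eq_zero_iff S 5).mpr h5S
  have hsum5 : ∑ i ∈ range (m+1), ((r : ℕ) : ZMod 5)^i = 0 := by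
    rw [hSdef] at hcast5; push_cast at hcast5; exact hcast5
  have hr5 : ((r:ℕ) : ZMod 5) = 1 := dpn_zmod5_sum hm hsum5
  have hrmod : r % 5 = 1 := by
    have h := (ZMod.natCast_eq_natCast_iff r 1 5).mp (by rw [hr5]; norm_num)
    simpa [Nat.ModEq] using h
  obtain ⟨y, hy⟩ : ∃ y, r = 1 + 5*y := ⟨r/5, by omega⟩
  -- 5 ∣ m+1
  have h5m1 : (5:ℕ) ∣ m+1 := by
    have hz : ((m+1 : ℕ) : ZMod 5) = 0 := by
      calc ((m+1:ℕ) : ZMod 5) = ∑ i ∈ range (m+1), (1 : ZMod 5)^i := by simp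
      _ = ∑ i ∈ range (m+1), ((r:ℕ) : ZMod 5)^i := by rw [hr5]
      _ = 0 := hsum5
    exact (ZMod.natCast_eq_zero_iff _ 5).mp hz
  obtain ⟨k, hk⟩ := h5m1
  set A := ∑ i ∈ range 5, r^i with hAdef
  set B := ∑ j ∈ range k, (r^5)^j with hBdef
  have hSAB : S = A * B := by
    rw [hSdef, hk, hAdef, hBdef]; exact dpn_geom_factor r 5 k
  -- A ≡ 5 mod 25
  have hr25 : ((r:ℕ) : ZMod 25) = 1 + 5 * ((y:ℕ) : ZMod 25) := by rw [hy]; push_cast; ring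
  have hA25 : ((A:ℕ) : ZMod 25) = 5 := by
    rw [hAdef]; push_cast; rw [hr25]; exact d25A _
  have hAmod : A % 25 = 5 := by
    have h := (ZMod.natCast_eq_natCast_iff A 5 25).mp (by rw [hA25]; norm_num)
    simpa [Nat.ModEq] using h
  obtain ⟨j, hj⟩ : ∃ j, A = 5*(5*j+1) := ⟨A/25, by omega⟩
  -- 25 ∣ B
  have h25B : (25:ℕ) ∣ B := by
    have h2 : (5:ℕ)*25 ∣ 5*((5*j+1)*B) := by
      have he : 5*((5*j+1)*B) = S := by rw [hSAB, hj]; ring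
      rw [he]
      have h53 : (5:ℕ)*25 = 5^3 := by norm_num
      rw [h53]; exact h125
    have h3 : (25:ℕ) ∣ (5*j+1)*B := (Nat.mul_dvd_mul_iff_left (by norm_num : (0:ℕ)<5)).mp h2
    have hcop : Nat.Coprime 25 (5*j+1) := by
      have h5c : Nat.Coprime 5 (5*j+1) :=
        (Nat.Prime.coprime_iff_not_dvd (by norm_num)).mpr (by omega)
      have := Nat.Coprime.pow_left 2 h5c
      simpa using this
    exact hcop.dvd_of_dvd_mul_left h3
  have h5B : (5:ℕ) ∣ B := dvd_trans (by norm_num) h25B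
  -- 5 ∣ k
  have h5k : (5:ℕ) ∣ k := by
    have hc : ((B:ℕ) : ZMod 5) = 0 := (ZMod.natCast_eq_zero_iff _ _).mpr h5B
    rw [hBdef] at hc; push_cast at hc
    rw [hr5] at hc
    simp at hc
    exact (ZMod.natCast_eq_zero_iff _ _).mp hc
  obtain ⟨k', hk'⟩ := h5k
  set B' := ∑ j ∈ range 5, (r^5)^j with hB'def
  have hBfact : B = B' * (∑ l ∈ range k', ((r^5)^5)^l) := by
    rw [hBdef, hk', hB'def]; exact dpn_geom_factor (r^5) 5 k'
  have hAS : A ∣ S := ⟨B, hSAB⟩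
  have hBS : B ∣ S := ⟨A, by rw [hSAB]; ring⟩
  have hB'S : B' ∣ S := dvd_trans ⟨(∑ l ∈ range k', ((r^5)^5)^l), hBfact⟩ hBS
  -- B' ≡ 5 mod 25
  have hr255 : (((r:ℕ) : ZMod 25))^5 = 1 := by rw [hr25]; exact d25B _
  have hB'25 : ((B':ℕ) : ZMod 25) = 5 := by
    rw [hB'def]; push_cast; rw [hr255]
    norm_num [Finset.sum_range_succ]
  have hB'mod : B' % 25 = 5 := by
    have h := (ZMod.natCast_eq_natCast_iff B' 5 25).mp (by rw [hB'25]; norm_num)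
    simpa [Nat.ModEq] using h
  obtain ⟨j', hj'⟩ : ∃ j', B' = 5*(5*j'+1) := ⟨B'/25, by omega⟩
  -- size bounds
  have hsum01 : ∀ z : ℕ, ∑ i ∈ range 2, z^i = 1 + z := by
    intro z
    rw [Finset.sum_range_succ, Finset.sum_range_one, pow_zero, pow_one]
  have hrA : 1 + r ≤ A := by
    rw [hAdef, ← hsum01 r]
    exact Finset.sum_le_sum_of_subset (Finset.range_subset_range.mpr (by norm_num))
  have hA5 : 5 < A := by omega
  have hr5le : r ≤ r^5 := Nat.le_self_pow (by norm_num) r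
  have hrB' : 1 + r^5 ≤ B' := by
    rw [hB'def, ← hsum01 (r^5)]
    exact Finset.sum_le_sum_of_subset (Finset.range_subset_range.mpr (by norm_num))
  have hB'5 : 5 < B' := by omega
  -- no small prime divides A or B'
  have h3A : ¬ (3:ℕ) ∣ A := by
    intro h
    have hc : ((A:ℕ) : ZMod 3) = 0 := (ZMod.natCast_eq_zero_iff _ _).mpr h
    rw [hAdef] at hc; push_cast at hc
    exact d3' _ hc
  have h17A : ¬ (17:ℕ) ∣ A := by
    intro h
    have hc : ((A:ℕ) : ZMod 17) = 0 := (ZMod.natCast_eq_zero_iff _ _).mpr h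
    rw [hAdef] at hc; push_cast at hc
    exact d17' _ hc
  have hrdvdA : ¬ r ∣ A := by
    intro h
    have hc : ((A:ℕ) : ZMod r) = 0 := (ZMod.natCast_eq_zero_iff _ _).mpr h
    rw [hAdef] at hc; push_cast at hc
    rw [ZMod.natCast_self] at hc
    have h2 : (∑ i ∈ range 5, (0:ZMod r)^i) = 1 := dpn_sum_zero_pow 4
    rw [h2] at hc
    exact one_ne_zero hc
  have h3B' : ¬ (3:ℕ) ∣ B' := by
    intro h
    have hc : ((B':ℕ) : ZMod 3) = 0 := (ZMod.natCast_eq_zero_iff _ _).mpr h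
    rw [hB'def] at hc; push_cast at hc
    exact d3' _ hc
  have h17B' : ¬ (17:ℕ) ∣ B' := by
    intro h
    have hc : ((B':ℕ) : ZMod 17) = 0 := (ZMod.natCast_eq_zero_iff _ _).mpr h
    rw [hB'def] at hc; push_cast at hc
    exact d17' _ hc
  have hrdvdB' : ¬ r ∣ B' := by
    intro h
    have hc : ((B':ℕ) : ZMod r) = 0 := (ZMod.natCast_eq_zero_iff _ _).mpr h
    rw [hB'def] at hc; push_cast at hc
    rw [ZMod.natCast_self] at hc
    have h1 : ((0:ZMod r)^5) = 0 := by norm_num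
    rw [h1] at hc
    have h2 : (∑ i ∈ range 5, (0:ZMod r)^i) = 1 := dpn_sum_zero_pow 4
    rw [h2] at hc
    exact one_ne_zero hc
  -- u divides A
  have huA : u ∣ A := by
    have hA2ne1 : 5*j+1 ≠ 1 := by omega
    have hs := Nat.minFac_prime hA2ne1
    have hsdvd2 : (5*j+1).minFac ∣ 5*j+1 := Nat.minFac_dvd _
    have hdvdA : (5*j+1) ∣ A := ⟨5, by rw [hj]; ring⟩
    have hsA : (5*j+1).minFac ∣ A := hsdvd2.trans hdvdA
    have hsS : (5*j+1).minFac ∣ S := hsA.trans hAS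
    rcases H _ hs hsS with h|h|h|h|h
    · exact absurd (h ▸ hsA) h3A
    · exact absurd (h ▸ hsdvd2) (by omega)
    · exact absurd (h ▸ hsA) h17A
    · exact absurd (h ▸ hsA) hrdvdA
    · exact (h ▸ hsdvd2).trans hdvdA
  -- u divides B'
  have huB' : u ∣ B' := by
    have hB2ne1 : 5*j'+1 ≠ 1 := by omega
    have hs := Nat.minFac_prime hB2ne1
    have hsdvd2 : (5*j'+1).minFac ∣ 5*j'+1 := Nat.minFac_dvd _
    have hdvdB : (5*j'+1) ∣ B' := ⟨5, by rw [hj']; ring⟩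
    have hsB : (5*j'+1).minFac ∣ B' := hsdvd2.trans hdvdB
    have hsS : (5*j'+1).minFac ∣ S := hsB.trans hB'S
    rcases H _ hs hsS with h|h|h|h|h
    · exact absurd (h ▸ hsB) h3B'
    · exact absurd (h ▸ hsdvd2) (by omega)
    · exact absurd (h ▸ hsB) h17B'
    · exact absurd (h ▸ hsB) hrdvdB'
    · exact (h ▸ hsdvd2).trans hdvdB
  -- final contradiction
  have hcA : ((A:ℕ) : ZMod u) = 0 := (ZMod.natCast_eq_zero_iff _ _).mpr huA
  have hxu : ((r:ℕ) : ZMod u)^5 = 1 := by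
    have hsum : ∑ i ∈ range 5, ((r:ℕ):ZMod u)^i = 0 := by
      rw [hAdef] at hcA; push_cast at hcA; exact hcA
    have hg := geom_sum_mul ((r:ℕ) : ZMod u) 5
    rw [hsum, zero_mul] at hg
    exact sub_eq_zero.mp hg.symm
  have hBeq : ((B':ℕ) : ZMod u) = ((5:ℕ) : ZMod u) := by
    rw [hB'def]; push_cast; rw [hxu]
    norm_num [Finset.sum_range_succ]
  have hmodu := (ZMod.natCast_eq_natCast_iff B' 5 u).mp hBeq
  obtain ⟨w, hw⟩ := huB'
  have h0 : B' % u = 0 := by rw [hw]; exact Nat.mul_mod_right u w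
  have h5u : 5 % u = 0 := by
    have hx : B' % u = 5 % u := hmodu
    omega
  have hdvd5 : u ∣ 5 := Nat.dvd_of_mod_eq_zero h5u
  have := Nat.le_of_dvd (by norm_num) hdvd5
  omega

theorem stmt11 (q p : ℕ) (hq : q.Prime) (hp : p.Prime)
    (hq67 : 67 ≤ q) (hq269 : q ≤ 269) (hqp : q < p)
    (α₁ α₂ α₃ α₄ : ℕ) (hα₁ : 0 < α₁) (hα₂ : 0 < α₂) (hα₃ : 0 < α₃) (hα₄ : 0 < α₄)
    (n : ℕ) (hn : n = 3 ^ α₁ * 5 ^ α₂ * q ^ α₃ * p ^ α₄)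
    (hodd : Odd n)
    (d : ℕ) (hdvd : d ∣ n) (hlt : d < n)
    (hσ : ArithmeticFunction.sigma 1 n = 2 * n - d) :
    False := by
  have hp3 : Nat.Prime 3 := by norm_num
  have hp5 : Nat.Prime 5 := by norm_num
  have hp71 : 71 ≤ p := by
    rcases Nat.lt_or_ge p 71 with hcon|h
    · exfalso
      have h68 : 68 ≤ p := by omega
      interval_cases p
      · exact absurd hp (by norm_num)
      · exact absurd hp (by norm_num)
      · exact absurd hp (by norm_num)
    · exact h
  have hq0 : 0 < q := by omega
  have hp0 : 0 < p := by omega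
  have hn0 : 0 < n := by rw [hn]; positivity
  -- sigma as product of geometric sums
  have c35 : Nat.Coprime (3^α₁) (5^α₂) := Nat.Coprime.pow _ _ (by norm_num)
  have c3q : Nat.Coprime (3^α₁) (q^α₃) := Nat.Coprime.pow _ _ ((Nat.coprime_primes hp3 hq).mpr (by omega))
  have c5q : Nat.Coprime (5^α₂) (q^α₃) := Nat.Coprime.pow _ _ ((Nat.coprime_primes hp5 hq).mpr (by omega))
  have c3p : Nat.Coprime (3^α₁) (p^α₄) := Nat.Coprime.pow _ _ ((Nat.coprime_primes hp3 hp).mpr (by omega))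
  have c5p : Nat.Coprime (5^α₂) (p^α₄) := Nat.Coprime.pow _ _ ((Nat.coprime_primes hp5 hp).mpr (by omega))
  have cqp : Nat.Coprime (q^α₃) (p^α₄) := Nat.Coprime.pow _ _ ((Nat.coprime_primes hq hp).mpr (by omega))
  have hσprod : ArithmeticFunction.sigma 1 n
      = (∑ i ∈ range (α₁+1), 3^i) * (∑ i ∈ range (α₂+1), 5^i)
        * (∑ i ∈ range (α₃+1), q^i) * (∑ i ∈ range (α₄+1), p^i) := by
    rw [hn]
    rw [ArithmeticFunction.isMultiplicative_sigma.map_mul_of_coprime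
        (Nat.Coprime.mul (Nat.Coprime.mul c3p c5p) cqp)]
    rw [ArithmeticFunction.isMultiplicative_sigma.map_mul_of_coprime
        (Nat.Coprime.mul c3q c5q)]
    rw [ArithmeticFunction.isMultiplicative_sigma.map_mul_of_coprime c35]
    rw [ArithmeticFunction.sigma_one_apply, ArithmeticFunction.sigma_one_apply,
        ArithmeticFunction.sigma_one_apply, ArithmeticFunction.sigma_one_apply]
    rw [Nat.sum_divisors_prime_pow hp3, Nat.sum_divisors_prime_pow hp5,
        Nat.sum_divisors_prime_pow hq, Nat.sum_divisors_prime_pow hp]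
  obtain ⟨S3, hS3⟩ : ∃ x, x = ∑ i ∈ range (α₁+1), (3:ℕ)^i := ⟨_, rfl⟩
  obtain ⟨S5, hS5⟩ : ∃ x, x = ∑ i ∈ range (α₂+1), (5:ℕ)^i := ⟨_, rfl⟩
  obtain ⟨Sq, hSq⟩ : ∃ x, x = ∑ i ∈ range (α₃+1), q^i := ⟨_, rfl⟩
  obtain ⟨Sp, hSp⟩ : ∃ x, x = ∑ i ∈ range (α₄+1), p^i := ⟨_, rfl⟩
  rw [← hS3, ← hS5, ← hSq, ← hSp] at hσprod
  rw [hσprod] at hσ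
  have hsd : S3*S5*Sq*Sp + d = 2*n := by omega
  -- oddness ⇒ even exponents
  have hnodd : n % 2 = 1 := Nat.odd_iff.mp hodd
  have hd2 : d % 2 = 1 := by
    rcases Nat.even_or_odd d with he|ho
    · exfalso
      obtain ⟨dd, hdd⟩ := he
      have h2n : 2 ∣ n := dvd_trans ⟨dd, by omega⟩ hdvd
      omega
    · exact Nat.odd_iff.mp ho
  have hσodd : Odd (S3*S5*Sq*Sp) := by rw [Nat.odd_iff]; omega
  have hfac := Nat.odd_mul.mp hσodd
  have hfac2 := Nat.odd_mul.mp hfac.1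
  have hfac3 := Nat.odd_mul.mp hfac2.1
  have hea : Even α₁ := dpn_parity 3 α₁ ⟨1, rfl⟩ (hS3 ▸ hfac3.1)
  have heb : Even α₂ := dpn_parity 5 α₂ ⟨2, rfl⟩ (hS5 ▸ hfac3.2)
  have hec : Even α₃ := dpn_parity q α₃ (hq.odd_of_ne_two (by omega)) (hSq ▸ hfac2.2)
  have hee : Even α₄ := dpn_parity p α₄ (hp.odd_of_ne_two (by omega)) (hSp ▸ hfac.2)
  -- prime divisors of n
  have hNdvd : ∀ s, Nat.Prime s → s ∣ n → s = 3 ∨ s = 5 ∨ s = q ∨ s = p := by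
    intro s hs hsn
    rw [hn] at hsn
    rcases (Nat.Prime.dvd_mul hs).mp hsn with h|h
    · rcases (Nat.Prime.dvd_mul hs).mp h with h'|h'
      · rcases (Nat.Prime.dvd_mul hs).mp h' with h''|h''
        · exact Or.inl ((Nat.prime_dvd_prime_iff_eq hs hp3).mp (hs.dvd_of_dvd_pow h''))
        · exact Or.inr (Or.inl ((Nat.prime_dvd_prime_iff_eq hs hp5).mp (hs.dvd_of_dvd_pow h'')))
      · exact Or.inr (Or.inr (Or.inl ((Nat.prime_dvd_prime_iff_eq hs hq).mp (hs.dvd_of_dvd_pow h'))))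
    · exact Or.inr (Or.inr (Or.inr ((Nat.prime_dvd_prime_iff_eq hs hp).mp (hs.dvd_of_dvd_pow h))))
  -- exponent lower bounds
  have hα₁2 : 2 ≤ α₁ := by obtain ⟨w, hw⟩ := hea; omega
  have hα₂2 : 2 ≤ α₂ := by obtain ⟨w, hw⟩ := heb; omega
  -- geometric identities
  have g3 : 2 * S3 + 1 = 3^(α₁+1) := by
    rw [hS3]
    have h := dpn_geom_auxX 3 (α₁+1) (by norm_num)
    norm_num at h
    exact h
  have g5 : 4 * S5 + 1 = 5^(α₂+1) := by
    rw [hS5]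
    have h := dpn_geom_auxX 5 (α₂+1) (by norm_num)
    norm_num at h
    exact h
  have gq : (q-1) * Sq + 1 = q^(α₃+1) := by
    rw [hSq]; exact dpn_geom_auxX q (α₃+1) (by omega)
  have gp : (p-1) * Sp + 1 = p^(α₄+1) := by
    rw [hSp]; exact dpn_geom_auxX p (α₄+1) (by omega)
  -- positivity
  have hS3pos : 0 < S3 := by
    rw [hS3]; exact Finset.sum_pos (fun i _ => pow_pos (by norm_num) i) (Finset.nonempty_range_iff.mpr (by omega))
  have hS5pos : 0 < S5 := by
    rw [hS5]; exact Finset.sum_pos (fun i _ => pow_pos (by norm_num) i) (Finset.nonempty_range_iff.mpr (by omega))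
  have hSqpos : 0 < Sq := by
    rw [hSq]; exact Finset.sum_pos (fun i _ => pow_pos (by omega) i) (Finset.nonempty_range_iff.mpr (by omega))
  have hSppos : 0 < Sp := by
    rw [hSp]; exact Finset.sum_pos (fun i _ => pow_pos (by omega) i) (Finset.nonempty_range_iff.mpr (by omega))
  -- lower bound pieces
  have hb13 : 13 * 3^α₁ ≤ 9 * S3 := by
    have hx : (9:ℕ) ≤ 3^α₁ := by
      calc (9:ℕ) = 3^2 := by norm_num
      _ ≤ 3^α₁ := Nat.pow_le_pow_right (by norm_num) hα₁2
    rw [pow_succ] at g3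
    omega
  have hb31 : 31 * 5^α₂ ≤ 25 * S5 := by
    have hx : (25:ℕ) ≤ 5^α₂ := by
      calc (25:ℕ) = 5^2 := by norm_num
      _ ≤ 5^α₂ := Nat.pow_le_pow_right (by norm_num) hα₂2
    rw [pow_succ] at g5
    omega
  have hbq : q^α₃ < Sq := by
    rw [hSq, Finset.sum_range_succ]
    have hpos : 0 < ∑ i ∈ range α₃, q^i :=
      Finset.sum_pos (fun i _ => pow_pos (by omega) i) (Finset.nonempty_range_iff.mpr (by omega))
    omega
  have hbp : p^α₄ < Sp := by
    rw [hSp, Finset.sum_range_succ]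
    have hpos : 0 < ∑ i ∈ range α₄, p^i :=
      Finset.sum_pos (fun i _ => pow_pos (by omega) i) (Finset.nonempty_range_iff.mpr (by omega))
    omega
  have hlow : 403 * n < 225 * (S3*S5*Sq*Sp) := by
    have e1 : 13*3^α₁ * (31*5^α₂) ≤ 9*S3 * (25*S5) := Nat.mul_le_mul hb13 hb31
    have e2 : q^α₃ * p^α₄ < Sq * Sp := mul_lt_mul'' hbq hbp (Nat.zero_le _) (Nat.zero_le _)
    have hpos : 0 < 9*S3 * (25*S5) := by positivity
    calc 403 * n = (13*3^α₁ * (31*5^α₂)) * (q^α₃ * p^α₄) := by rw [hn]; ring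
    _ ≤ (9*S3 * (25*S5)) * (q^α₃ * p^α₄) := Nat.mul_le_mul_right _ e1
    _ < (9*S3 * (25*S5)) * (Sq * Sp) := mul_lt_mul_of_pos_left e2 hpos
    _ = 225 * (S3*S5*Sq*Sp) := by ring
  -- upper bound pieces
  have hu3 : 2 * S3 < 3 * 3^α₁ := by rw [pow_succ] at g3; omega
  have hu5 : 4 * S5 < 5 * 5^α₂ := by rw [pow_succ] at g5; omega
  have huq : 66 * Sq < 67 * q^α₃ := by
    have h1 : (q-1)*Sq < q^(α₃+1) := by rw [← gq]; exact Nat.lt_succ_self _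
    have h2 : (q-1) * (66 * Sq) < (q-1) * (67 * q^α₃) := by
      calc (q-1) * (66 * Sq) = 66 * ((q-1) * Sq) := by ring
      _ < 66 * q^(α₃+1) := mul_lt_mul_of_pos_left h1 (by norm_num)
      _ = (66*q) * q^α₃ := by rw [pow_succ]; ring
      _ ≤ (67*(q-1)) * q^α₃ := Nat.mul_le_mul_right _ (by omega)
      _ = (q-1) * (67 * q^α₃) := by ring
    exact Nat.lt_of_mul_lt_mul_left h2
  have hup : 70 * Sp < 71 * p^α₄ := by
    have h1 : (p-1)*Sp < p^(α₄+1) := by rw [← gp]; exact Nat.lt_succ_self _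
    have h2 : (p-1) * (70 * Sp) < (p-1) * (71 * p^α₄) := by
      calc (p-1) * (70 * Sp) = 70 * ((p-1) * Sp) := by ring
      _ < 70 * p^(α₄+1) := mul_lt_mul_of_pos_left h1 (by norm_num)
      _ = (70*p) * p^α₄ := by rw [pow_succ]; ring
      _ ≤ (71*(p-1)) * p^α₄ := Nat.mul_le_mul_right _ (by omega)
      _ = (p-1) * (71 * p^α₄) := by ring
    exact Nat.lt_of_mul_lt_mul_left h2
  have hhigh : 36960 * (S3*S5*Sq*Sp) < 71355 * n := by
    have e1 : (2*S3)*(4*S5) < (3*3^α₁)*(5*5^α₂) :=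
      mul_lt_mul'' hu3 hu5 (Nat.zero_le _) (Nat.zero_le _)
    have e2 : (66*Sq)*(70*Sp) < (67*q^α₃)*(71*p^α₄) :=
      mul_lt_mul'' huq hup (Nat.zero_le _) (Nat.zero_le _)
    have e3 : ((2*S3)*(4*S5))*((66*Sq)*(70*Sp)) < ((3*3^α₁)*(5*5^α₂))*((67*q^α₃)*(71*p^α₄)) :=
      mul_lt_mul'' e1 e2 (Nat.zero_le _) (Nat.zero_le _)
    calc 36960 * (S3*S5*Sq*Sp) = ((2*S3)*(4*S5))*((66*Sq)*(70*Sp)) := by ring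
    _ < ((3*3^α₁)*(5*5^α₂))*((67*q^α₃)*(71*p^α₄)) := e3
    _ = 71355 * n := by rw [hn]; ring
  -- the quotient t
  have hd0 : 0 < d := Nat.pos_of_dvd_of_pos hdvd hn0
  obtain ⟨t, hdt⟩ : ∃ t, d * t = n := ⟨n/d, Nat.mul_div_cancel' hdvd⟩
  have ht0 : 0 < t := by
    rcases Nat.eq_zero_or_pos t with h|h
    · rw [h, Nat.mul_zero] at hdt; omega
    · exact h
  have htσ : t * (S3*S5*Sq*Sp) + n = 2*(t*n) := by
    calc t * (S3*S5*Sq*Sp) + n = t*(S3*S5*Sq*Sp) + d*t := by rw [hdt]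
    _ = t * ((S3*S5*Sq*Sp) + d) := by ring
    _ = t * (2*n) := by rw [hsd]
    _ = 2*(t*n) := by ring
  have htlow : 5 ≤ t := by
    by_contra hcon
    push_neg at hcon
    have h1 : 403*(t*n) < 225*(t*(S3*S5*Sq*Sp)) := by
      calc 403*(t*n) = t*(403*n) := by ring
      _ < t*(225*(S3*S5*Sq*Sp)) := mul_lt_mul_of_pos_left hlow ht0
      _ = 225*(t*(S3*S5*Sq*Sp)) := by ring
    have h3 : t*n ≤ 4*n := Nat.mul_le_mul_right n (by omega)
    linarith
  have hthigh : t ≤ 14 := by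
    by_contra hcon
    push_neg at hcon
    have h1 : 36960*(t*(S3*S5*Sq*Sp)) < 71355*(t*n) := by
      calc 36960*(t*(S3*S5*Sq*Sp)) = t*(36960*(S3*S5*Sq*Sp)) := by ring
      _ < t*(71355*n) := mul_lt_mul_of_pos_left hhigh ht0
      _ = 71355*(t*n) := by ring
    have h3 : 15*n ≤ t*n := Nat.mul_le_mul_right n (by omega)
    linarith
  have htdvdn : t ∣ n := ⟨d, by rw [← hdt]; ring⟩
  have htodd : t % 2 = 1 := by
    rcases Nat.even_or_odd t with he|ho
    · exfalso
      obtain ⟨w, hw⟩ := he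
      have h2n : 2 ∣ n := ⟨d*w, by rw [← hdt, hw]; ring⟩
      omega
    · exact Nat.odd_iff.mp ho
  have ht59 : t = 5 ∨ t = 9 := by
    interval_cases t
    · exact Or.inl rfl
    · omega
    · exfalso; rcases hNdvd 7 (by norm_num) htdvdn with h|h|h|h <;> omega
    · omega
    · exact Or.inr rfl
    · omega
    · exfalso; rcases hNdvd 11 (by norm_num) htdvdn with h|h|h|h <;> omega
    · omega
    · exfalso; rcases hNdvd 13 (by norm_num) htdvdn with h|h|h|h <;> omega
    · omega
  have hcase : 5 * (S3*S5*Sq*Sp) = 9*n ∨ 9*(S3*S5*Sq*Sp) = 17*n := by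
    rcases ht59 with h|h
    · left; rw [h] at hdt; omega
    · right; rw [h] at hdt; omega
  -- prime classification for divisors of sigma
  have hclass : ∀ s, Nat.Prime s → s ∣ S3*S5*Sq*Sp → s = 3 ∨ s = 5 ∨ s = 17 ∨ s = q ∨ s = p := by
    intro s hs hsdvd
    rcases hcase with h|h
    · have h9 : s ∣ 9*n := by rw [← h]; exact hsdvd.mul_left 5
      rcases (Nat.Prime.dvd_mul hs).mp h9 with h'|h'
      · have h32 : (9:ℕ) = 3^2 := by norm_num
        rw [h32] at h'
        exact Or.inl ((Nat.prime_dvd_prime_iff_eq hs hp3).mp (hs.dvd_of_dvd_pow h'))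
      · rcases hNdvd s hs h' with h''|h''|h''|h''
        · exact Or.inl h''
        · exact Or.inr (Or.inl h'')
        · exact Or.inr (Or.inr (Or.inr (Or.inl h'')))
        · exact Or.inr (Or.inr (Or.inr (Or.inr h'')))
    · have h17 : s ∣ 17*n := by rw [← h]; exact hsdvd.mul_left 9
      rcases (Nat.Prime.dvd_mul hs).mp h17 with h'|h'
      · exact Or.inr (Or.inr (Or.inl ((Nat.prime_dvd_prime_iff_eq hs (by norm_num)).mp h')))
      · rcases hNdvd s hs h' with h''|h''|h''|h''
        · exact Or.inl h''
        · exact Or.inr (Or.inl h'')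
        · exact Or.inr (Or.inr (Or.inr (Or.inl h'')))
        · exact Or.inr (Or.inr (Or.inr (Or.inr h'')))
  -- α₂ ≥ 6
  have hS5dvd : S5 ∣ S3*S5*Sq*Sp := ⟨S3*Sq*Sp, by ring⟩
  have hα₂6 : 6 ≤ α₂ := by
    have h2 : α₂ ≠ 2 := by
      rintro rfl
      have hv : S5 = 31 := by rw [hS5]; simp [Finset.sum_range_succ]
      have h31 : (31:ℕ) ∣ S3*S5*Sq*Sp := hv ▸ hS5dvd
      rcases hclass 31 (by norm_num) h31 with h|h|h|h|h <;> omega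
    have h4 : α₂ ≠ 4 := by
      rintro rfl
      have hv : S5 = 781 := by rw [hS5]; simp [Finset.sum_range_succ]
      have h11 : (11:ℕ) ∣ S3*S5*Sq*Sp := by
        refine dvd_trans ?_ hS5dvd
        rw [hv]
        norm_num
      rcases hclass 11 (by norm_num) h11 with h|h|h|h|h <;> omega
    obtain ⟨w, hw⟩ := heb
    omega
  -- 5^5 divides sigma
  have h55 : (5:ℕ)^5 ∣ S3*S5*Sq*Sp := by
    have h5n : (5:ℕ)^6 ∣ n := by
      rw [hn]
      have hdv : (5:ℕ)^6 ∣ 5^α₂ := pow_dvd_pow 5 (by omega)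
      exact ((hdv.mul_left (3^α₁)).mul_right (q^α₃)).mul_right (p^α₄)
    rcases hcase with h|h
    · have h6 : (5:ℕ)^6 ∣ 5*(S3*S5*Sq*Sp) := by rw [h]; exact h5n.mul_left 9
      have he : (5:ℕ)^6 = 5*5^5 := by norm_num
      rw [he] at h6
      exact (Nat.mul_dvd_mul_iff_left (by norm_num : (0:ℕ)<5)).mp h6
    · have h6 : (5:ℕ)^6 ∣ 9*(S3*S5*Sq*Sp) := by rw [h]; exact h5n.mul_left 17
      have hcop : Nat.Coprime (5^6) 9 := Nat.Coprime.pow_left 6 (by decide)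
      exact dvd_trans (pow_dvd_pow 5 (by norm_num)) (hcop.dvd_of_dvd_mul_left h6)
  -- 5 does not divide S3 or S5
  have h5S3 : ¬ (5:ℕ) ∣ S3 := by
    intro h
    have hc : ((S3:ℕ) : ZMod 5) = 0 := (ZMod.natCast_eq_zero_iff _ _).mpr h
    rw [hS3] at hc; push_cast at hc
    have h31 := dpn_zmod5_sum hea hc
    revert h31; decide
  have h5S5 : ¬ (5:ℕ) ∣ S5 := by
    intro h
    have hc : ((S5:ℕ) : ZMod 5) = 0 := (ZMod.natCast_eq_zero_iff _ _).mpr h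
    rw [hS5] at hc; push_cast at hc
    rw [show ((5:ZMod 5)) = 0 by decide] at hc
    rw [dpn_sum_zero_pow] at hc
    exact absurd hc (by decide)
  have hcop55 : Nat.Coprime (5^5) (S3*S5) :=
    Nat.Coprime.pow_left 5 (Nat.Coprime.mul_right
      ((hp5.coprime_iff_not_dvd).mpr h5S3) ((hp5.coprime_iff_not_dvd).mpr h5S5))
  have h55qp : (5:ℕ)^5 ∣ Sq*Sp := by
    refine hcop55.dvd_of_dvd_mul_left ?_
    have he : (S3*S5)*(Sq*Sp) = S3*S5*Sq*Sp := by ring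
    rw [he]
    exact h55
  have hsplit : (5:ℕ)^3 ∣ Sq ∨ (5:ℕ)^3 ∣ Sp := by
    by_contra hc
    push_neg at hc
    obtain ⟨hc1, hc2⟩ := hc
    have hf1 : Sq.factorization 5 < 3 := by
      by_contra hf
      push_neg at hf
      exact hc1 ((Nat.Prime.pow_dvd_iff_le_factorization hp5 (by omega)).mpr hf)
    have hf2 : Sp.factorization 5 < 3 := by
      by_contra hf
      push_neg at hf
      exact hc2 ((Nat.Prime.pow_dvd_iff_le_factorization hp5 (by omega)).mpr hf)
    have h5f : 5 ≤ (Sq*Sp).factorization 5 :=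
      (Nat.Prime.pow_dvd_iff_le_factorization hp5 (by positivity)).mp h55qp
    rw [Nat.factorization_mul (by omega) (by omega)] at h5f
    rw [Finsupp.add_apply] at h5f
    omega
  -- conclude with the key lemma
  rcases hsplit with hsp|hsp
  · refine dpn_key q p hq hp hq67 (by omega) α₃ hec ?_ ?_
    · rw [← hSq]; exact hsp
    · intro s hs hsd
      rw [← hSq] at hsd
      exact hclass s hs (hsd.trans ⟨S3*S5*Sp, by ring⟩)
  · refine dpn_key p q hp hq (by omega) hq67 α₄ hee ?_ ?_
    · rw [← hSp]; exact hsp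
    · intro s hs hsd
      rw [← hSp] at hsd
      rcases hclass s hs (hsd.trans ⟨S3*S5*Sq, by ring⟩) with h|h|h|h|h
      · exact Or.inl h
      · exact Or.inr (Or.inl h)
      · exact Or.inr (Or.inr (Or.inl h))
      · exact Or.inr (Or.inr (Or.inr (Or.inr h)))
      · exact Or.inr (Or.inr (Or.inr (Or.inl h)))
end

section
/- There is no odd deficient-perfect number of the form n = 3^{α1} · 7^{α2} · 17^{α3} · p^{α4} with deficient divisor d satisfying n/d ≥ 7, where p is a prime with p > 17 and α1, α2, α3, α4 are positive integers. That is, no such n admits a proper divisor d with σ(n) = 2n - d and n/d ≥ 7. -/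
open Finset

/-- Geometric sum `1 + x + ... + x^(m-1)`. -/
def S (x m : ℕ) : ℕ := ∑ i ∈ Finset.range m, x ^ i

lemma S_succ (x m : ℕ) : S x (m+1) = S x m + x^m := Finset.sum_range_succ _ _

lemma S_pos (x m : ℕ) (hx : 1 ≤ x) (hm : 1 ≤ m) : 1 ≤ S x m := by
  calc (1:ℕ) = x ^ 0 := (pow_zero x).symm
  _ ≤ ∑ i ∈ Finset.range m, x ^ i :=
    Finset.single_le_sum (f := fun i => x ^ i) (fun i _ => Nat.zero_le _)
      (Finset.mem_range.mpr hm)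

lemma Sid (y m : ℕ) : S (y+1) m * y + 1 = (y+1)^m := by
  induction m with
  | zero => simp [S]
  | succ m ih =>
    rw [S_succ, pow_succ]
    nlinarith [ih]

lemma S_cast (x m q : ℕ) : ((S x m : ℕ) : ZMod q) = ∑ i ∈ Finset.range m, (x : ZMod q)^i := by
  unfold S
  push_cast
  rfl

lemma S_zmod (x m q : ℕ) (hx : (x : ZMod q) = 1) : ((S x m : ℕ) : ZMod q) = (m : ZMod q) := by
  rw [S_cast, hx]
  simp

lemma S_mod (x m q : ℕ) (hx : x % q = 1) : S x m % q = m % q := by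
  have hx' : (x : ZMod q) = 1 := by
    have : ((x % q : ℕ) : ZMod q) = ((1:ℕ) : ZMod q) := by rw [hx]
    rwa [ZMod.natCast_mod, Nat.cast_one] at this
  have := S_zmod x m q hx'
  have h2 : S x m ≡ m [MOD q] := (ZMod.natCast_eq_natCast_iff _ _ _).mp this
  exact h2

lemma L0 (q x m : ℕ) (h : q ∣ S x m) : (x : ZMod q)^m = 1 := by
  have h0 : ((S x m : ℕ) : ZMod q) = 0 := (ZMod.natCast_eq_zero_iff _ _).mpr h
  rw [S_cast] at h0
  have := geom_sum_mul (x : ZMod q) m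
  rw [h0, zero_mul] at this
  exact sub_eq_zero.mp this.symm

lemma Lord (q x m : ℕ) (h : q ∣ S x m) : orderOf (x : ZMod q) ∣ m :=
  orderOf_dvd_of_pow_eq_one (L0 q x m h)

lemma Lfermat (q x m : ℕ) (hq : q.Prime) (hm : m ≠ 0) (h : q ∣ S x m) :
    orderOf (x : ZMod q) ∣ q - 1 := by
  haveI : Fact q.Prime := ⟨hq⟩
  have h1 : (x : ZMod q)^m = 1 := L0 q x m h
  have hx0 : (x : ZMod q) ≠ 0 := by
    intro h0
    rw [h0, zero_pow hm] at h1
    exact one_ne_zero h1.symm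
  exact orderOf_dvd_of_pow_eq_one (ZMod.pow_card_sub_one_eq_one hx0)

lemma C17 (x m : ℕ) (hm : Odd m) (h : 17 ∣ S x m) : (x : ZMod 17) = 1 := by
  have h1 := Lord 17 x m h
  have h2 := Lfermat 17 x m (by norm_num) (by rintro rfl; exact (Nat.not_odd_iff.mpr rfl) hm) h
  norm_num at h2
  have hg : orderOf (x : ZMod 17) ∣ Nat.gcd 16 m := Nat.dvd_gcd h2 h1
  have hco : Nat.gcd 16 m = 1 := by
    have : Nat.Coprime (2^4) m := Nat.Coprime.pow_left 4 (Nat.coprime_two_left.mpr hm)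
    exact this
  rw [hco, Nat.dvd_one] at hg
  exact orderOf_eq_one_iff.mp hg

lemma C3 (x m : ℕ) (hm : Odd m) (h : 3 ∣ S x m) : (x : ZMod 3) = 1 := by
  have h1 := Lord 3 x m h
  have h2 := Lfermat 3 x m (by norm_num) (by rintro rfl; exact (Nat.not_odd_iff.mpr rfl) hm) h
  norm_num at h2
  have hg : orderOf (x : ZMod 3) ∣ Nat.gcd 2 m := Nat.dvd_gcd h2 h1
  have hco : Nat.gcd 2 m = 1 := Nat.coprime_two_left.mpr hm
  rw [hco, Nat.dvd_one] at hg
  exact orderOf_eq_one_iff.mp hg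

lemma C7 (x m : ℕ) (hm : Odd m) (h : 7 ∣ S x m) : (x : ZMod 7)^3 = 1 := by
  have h1 := Lord 7 x m h
  have h2 := Lfermat 7 x m (by norm_num) (by rintro rfl; exact (Nat.not_odd_iff.mpr rfl) hm) h
  norm_num at h2
  have hg : orderOf (x : ZMod 7) ∣ Nat.gcd 6 m := Nat.dvd_gcd h2 h1
  have hg3 : Nat.gcd 6 m ∣ 3 := by
    have hd6 : Nat.gcd 6 m ∣ 6 := Nat.gcd_dvd_left _ _
    have hdm : Nat.gcd 6 m ∣ m := Nat.gcd_dvd_right _ _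
    have hodd : ¬ (2 ∣ Nat.gcd 6 m) := by
      intro h2d
      have h2m := h2d.trans hdm
      rw [Nat.odd_iff] at hm
      omega
    rcases (Nat.le_of_dvd (by norm_num) hd6).lt_or_eq with h6 | h6
    · interval_cases h : Nat.gcd 6 m <;> revert hd6 hodd <;> decide
    · omega
  exact orderOf_dvd_iff_pow_eq_one.mp (hg.trans hg3)

lemma L_self (x k : ℕ) (hx : 2 ≤ x) : ¬ x ∣ S x (k+1) := by
  intro h
  have hs : S x (k+1) = (∑ i ∈ Finset.range k, x^(i+1)) + 1 := by
    unfold S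
    rw [Finset.sum_range_succ']
    simp
  have hd : x ∣ ∑ i ∈ Finset.range k, x^(i+1) := by
    apply Finset.dvd_sum
    intro i _
    exact Dvd.intro (x^i) (by ring)
  have h1 : x ∣ 1 := by
    have := Nat.dvd_sub h hd
    rwa [hs, Nat.add_sub_cancel_left] at this
  exact absurd (Nat.le_of_dvd one_pos h1) (by omega)

lemma Sfact (x q m : ℕ) : S x (q * m) = S (x^q) m * S x q := by
  induction m with
  | zero => simp [S]
  | succ m ih =>
    have h1 : q * (m + 1) = q * m + q := by ring
    rw [h1]
    unfold S
    rw [Finset.sum_range_add]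
    unfold S at ih
    rw [ih, Finset.sum_range_succ]
    have h2 : ∀ i, x ^ (q * m + i) = (x^q)^m * x^i := fun i => by rw [pow_add, pow_mul]
    rw [Finset.sum_congr rfl (fun i _ => h2 i), ← Finset.mul_sum]
    ring

lemma binom_nilp {R : Type*} [CommRing R] (u : R) (hu : u * u = 0) (i : ℕ) :
    (1 + u)^i = 1 + (i : R) * u := by
  induction i with
  | zero => simp
  | succ i ih =>
    rw [pow_succ, ih]
    have h2 : (1 + (i:R)*u) * (1+u) = 1 + ((i:R)+1)*u + (i:R)*(u*u) := by ring
    rw [h2, hu, mul_zero, add_zero]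
    push_cast
    ring

lemma Sq_mod (q x : ℕ) (hq : q.Prime) (hodd : Odd q) (hx : x % q = 1) :
    S x q % (q^2) = q := by
  have hq2 : 2 ≤ q := hq.two_le
  have hx1 : 1 ≤ x := by have := Nat.mod_le x q; omega
  obtain ⟨s, hs⟩ : ∃ s, x = q * s + 1 := ⟨x / q, by have := Nat.div_add_mod x q; omega⟩
  have key : ((S x q : ℕ) : ZMod (q^2)) = ((q : ℕ) : ZMod (q^2)) := by
    rw [S_cast]
    have hu : ((q * s : ℕ) : ZMod (q^2)) * ((q * s : ℕ) : ZMod (q^2)) = 0 := by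
      rw [← Nat.cast_mul, ZMod.natCast_eq_zero_iff]
      exact ⟨s * s, by ring⟩
    have hxc : (x : ZMod (q^2)) = 1 + ((q * s : ℕ) : ZMod (q^2)) := by
      rw [hs]; push_cast; ring
    rw [hxc]
    have hterm : ∀ i ∈ Finset.range q, (1 + ((q * s : ℕ) : ZMod (q^2)))^i
        = 1 + (i : ZMod (q^2)) * ((q * s : ℕ) : ZMod (q^2)) :=
      fun i _ => binom_nilp _ hu i
    rw [Finset.sum_congr rfl hterm, Finset.sum_add_distrib, ← Finset.sum_mul]
    have hsum : (∑ i ∈ Finset.range q, (i : ZMod (q^2)))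
        = ((∑ i ∈ Finset.range q, i : ℕ) : ZMod (q^2)) := by push_cast; rfl
    rw [hsum]
    have hgauss : (∑ i ∈ Finset.range q, i) = q * ((q - 1) / 2) := by
      have h2 : (∑ i ∈ Finset.range q, i) * 2 = q * (q - 1) := Finset.sum_range_id_mul_two q
      have hodd' : q % 2 = 1 := Nat.odd_iff.mp hodd
      have h3 : q * ((q-1)/2) * 2 = q * (q - 1) := by
        have h4 : (q-1)/2*2 = q - 1 := by omega
        rw [mul_assoc, h4]
      omega
    have hzero : ((∑ i ∈ Finset.range q, i : ℕ) : ZMod (q^2)) * ((q * s : ℕ) : ZMod (q^2)) = 0 := by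
      rw [← Nat.cast_mul, ZMod.natCast_eq_zero_iff, hgauss]
      exact ⟨((q-1)/2) * s, by ring⟩
    rw [hzero]
    simp
  have hmod : S x q ≡ q [MOD q^2] := (ZMod.natCast_eq_natCast_iff _ _ _).mp key
  have hlt : q % q^2 = q := Nat.mod_eq_of_lt (by nlinarith)
  unfold Nat.ModEq at hmod
  rw [hlt] at hmod
  exact hmod

lemma L1 (q : ℕ) (hq : q.Prime) (hodd : Odd q) :
    ∀ k x m, x % q = 1 → q ^ k ∣ S x m → q ^ k ∣ m := by
  intro k
  induction k with
  | zero => simp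
  | succ k ih =>
    intro x m hx h
    have hq2 : 2 ≤ q := hq.two_le
    have hqd : q ∣ S x m := dvd_trans (dvd_pow_self q (Nat.succ_ne_zero k)) h
    have hm : q ∣ m := by
      have h1 := S_mod x m q hx
      obtain ⟨j, hj⟩ := hqd
      rw [hj] at h1
      have h2 : q * j % q = 0 := Nat.mul_mod_right q j
      exact Nat.dvd_of_mod_eq_zero (by omega)
    obtain ⟨m', rfl⟩ := hm
    rw [Sfact] at h
    have hsq := Sq_mod q x hq hodd hx
    set j := S x q / q^2 with hjdef
    have hSq : S x q = q * (q * j + 1) := by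
      have h0 := Nat.div_add_mod (S x q) (q^2)
      rw [← hjdef] at h0
      rw [show q * (q * j + 1) = q^2 * j + q by ring]
      omega
    have hnt : ¬ q ∣ (q * j + 1) := by
      intro hdvd
      have h1 : q ∣ 1 := (Nat.dvd_add_right (Dvd.intro j rfl)).mp hdvd
      exact absurd (Nat.le_of_dvd one_pos h1) (by omega)
    rw [hSq] at h
    have h2 : q^k * q ∣ (S (x^q) m' * (q * j + 1)) * q := by
      have h3 : S (x ^ q) m' * (q * (q * j + 1)) = (S (x^q) m' * (q * j + 1)) * q := by ring
      rw [h3] at h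
      rwa [pow_succ] at h
    have h3 : q^k ∣ S (x^q) m' * (q * j + 1) :=
      (Nat.mul_dvd_mul_iff_right (by omega : 0 < q)).mp h2
    have hcop : Nat.Coprime (q^k) (q * j + 1) :=
      Nat.Coprime.pow_left k (hq.coprime_iff_not_dvd.mpr hnt)
    have h4 : q^k ∣ S (x^q) m' := hcop.dvd_of_dvd_mul_right h3
    have hxq : x^q % q = 1 := by
      rw [Nat.pow_mod, hx, one_pow]
      exact Nat.one_mod_eq_one.mpr (by omega)
    obtain ⟨w, hw⟩ := ih (x^q) m' hxq h4
    exact ⟨w, by rw [pow_succ, hw]; ring⟩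

lemma S_parity (x m : ℕ) (hx : x % 2 = 1) (h : Odd (S x m)) : Odd m := by
  have := S_mod x m 2 hx
  rw [Nat.odd_iff] at h ⊢
  omega

lemma sigma_pp (q k : ℕ) (hq : q.Prime) : ArithmeticFunction.sigma 1 (q^k) = S q (k+1) := by
  rw [ArithmeticFunction.sigma_one_apply, Nat.sum_divisors_prime_pow hq]
  simp [S]

lemma le_pow7 (k : ℕ) : k + 3 ≤ 7^(k+1) := by
  induction k with
  | zero => norm_num
  | succ k ih =>
    have : 7^(k+1+1) = 7 * 7^(k+1) := by ring
    omega

lemma boundD (P DD MM : ℕ) (h1 : 19 ≤ P) (h2 : 27 ≤ DD) (h3 : MM + 1 = 2*DD)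
    (h4 : 192*((P-1)*MM) < 357*(P*DD)) : False := by
  obtain ⟨s, rfl⟩ : ∃ s, P = 19 + s := ⟨P-19, by omega⟩
  obtain ⟨t, rfl⟩ : ∃ t, DD = 27 + t := ⟨DD-27, by omega⟩
  have hMM : MM = 53 + 2*t := by omega
  subst hMM
  have hs : (19 + s - 1) = 18 + s := by omega
  rw [hs] at h4
  nlinarith [h4]

lemma prod_lt4 (u v w z : ℕ) (hu : 0 < u) (hv : 0 < v) :
    u*(v*(w*z)) < (u+1)*((v+1)*((w+1)*(z+1))) := by
  have h1 : w*z < (w+1)*(z+1) := by nlinarith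
  have h2 : v*(w*z) < (v+1)*((w+1)*(z+1)) :=
    lt_of_lt_of_le (mul_lt_mul_of_pos_left h1 hv)
      (Nat.mul_le_mul (Nat.le_succ v) (le_refl _))
  exact lt_of_lt_of_le (mul_lt_mul_of_pos_left h2 hu)
      (Nat.mul_le_mul (Nat.le_succ u) (le_refl _))

lemma prod_lt3 (u v w : ℕ) (hu : 0 < u) : u*(v*w) < (u+1)*((v+1)*(w+1)) := by
  have h1 : v*w < (v+1)*(w+1) := by nlinarith
  exact lt_of_lt_of_le (mul_lt_mul_of_pos_left h1 hu)
    (Nat.mul_le_mul (Nat.le_succ u) (le_refl _))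

set_option maxHeartbeats 1000000 in
lemma case7 (p α₁ α₂ α₃ α₄ n σv A B C E : ℕ)
    (hp : p.Prime) (hpq : 17 < p)
    (hoa : Odd (α₁+1)) (hob : Odd (α₂+1)) (hoc : Odd (α₃+1)) (hoe : Odd (α₄+1))
    (hb2 : 2 ≤ α₂) (hc2 : 2 ≤ α₃)
    (hAdef : A = S 3 (α₁+1)) (hBdef : B = S 7 (α₂+1)) (hCdef : C = S 17 (α₃+1))
    (hEdef : E = S p (α₄+1)) (hσv : σv = A*B*C*E)
    (h3an : 3^α₁ ∣ n) (h7bn : 7^α₂ ∣ n) (h17cn : 17^α₃ ∣ n) (hpen : p^α₄ ∣ n)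
    (k7 : 7*σv = 13*n) : False := by
  have p3 : Nat.Prime 3 := by norm_num
  have p7 : Nat.Prime 7 := by norm_num
  have p17 : Nat.Prime 17 := by norm_num
  have hp19 : 19 ≤ p := by
    rcases Nat.lt_or_ge p 19 with h | h
    · interval_cases p <;> revert hp <;> decide
    · exact h
  have hpodd : p % 2 = 1 := Nat.odd_iff.mp (hp.odd_of_ne_two (by omega))
  have hA1 : 1 ≤ A := hAdef ▸ S_pos 3 _ (by norm_num) (by omega)
  have hB1 : 1 ≤ B := hBdef ▸ S_pos 7 _ (by norm_num) (by omega)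
  have hC1 : 1 ≤ C := hCdef ▸ S_pos 17 _ (by norm_num) (by omega)
  have hE1 : 1 ≤ E := hEdef ▸ S_pos p _ (by omega) (by omega)
  have iA : A * 2 + 1 = 3^(α₁+1) := hAdef ▸ Sid 2 (α₁+1)
  have iB : B * 6 + 1 = 7^(α₂+1) := hBdef ▸ Sid 6 (α₂+1)
  have iC : C * 16 + 1 = 17^(α₃+1) := hCdef ▸ Sid 16 (α₃+1)
  have iE : E * (p-1) + 1 = p^(α₄+1) := by
    have h1 := Sid (p-1) (α₄+1)
    rw [show p - 1 + 1 = p by omega] at h1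
    rw [hEdef]
    exact h1
  -- non-divisibility
  have n17A : ¬ (17:ℕ) ∣ A := by
    intro h
    have := C17 3 (α₁+1) hoa (hAdef ▸ h)
    revert this; decide
  have n17B : ¬ (17:ℕ) ∣ B := by
    intro h
    have := C17 7 (α₂+1) hob (hBdef ▸ h)
    revert this; decide
  have n17C : ¬ (17:ℕ) ∣ C := fun h => L_self 17 α₃ (by norm_num) (hCdef ▸ h)
  have n17ABC : ¬ (17:ℕ) ∣ A*B*C := by
    intro h
    rcases (Nat.Prime.dvd_mul p17).mp h with h'|h'
    · rcases (Nat.Prime.dvd_mul p17).mp h' with h''|h''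
      · exact n17A h''
      · exact n17B h''
    · exact n17C h'
  -- 17^c ∣ E and p ≡ 1 (mod 17)
  have h17cσ : (17:ℕ)^α₃ ∣ σv := by
    have h1 : (17:ℕ)^α₃ ∣ 13*n := Dvd.dvd.mul_left h17cn 13
    rw [← k7] at h1
    exact Nat.Coprime.dvd_of_dvd_mul_left (Nat.Coprime.pow_left _ (by norm_num)) h1
  have h17E : (17:ℕ)^α₃ ∣ E :=
    (Nat.Coprime.pow_left _ ((Nat.Prime.coprime_iff_not_dvd p17).mpr n17ABC)).dvd_of_dvd_mul_left
      (hσv ▸ h17cσ)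
  have h17dvdE : (17:ℕ) ∣ E := (dvd_pow_self 17 (by omega : α₃ ≠ 0)).trans h17E
  have hp17z := C17 p (α₄+1) hoe (hEdef ▸ h17dvdE)
  have hp17 : p % 17 = 1 := by
    have h1 : ((p:ℕ) : ZMod 17) = ((1:ℕ) : ZMod 17) := by rw [hp17z]; norm_num
    have h2 := (ZMod.natCast_eq_natCast_iff _ _ _).mp h1
    unfold Nat.ModEq at h2
    omega
  have hp103 : 103 ≤ p := by
    by_contra hcon
    push_neg at hcon
    have : p = 35 ∨ p = 69 := by omega
    rcases this with rfl | rfl <;> revert hp <;> decide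
  have h17e : (17:ℕ)^α₃ ∣ α₄ + 1 := L1 17 p17 (by decide) α₃ p (α₄+1) hp17 (hEdef ▸ h17E)
  have c_bound : (17:ℕ)^α₃ ≤ α₄+1 := Nat.le_of_dvd (by omega) h17e
  have hQ289 : 289 ≤ α₄ + 1 := by
    have h1 : (17:ℕ)^2 ≤ 17^α₃ := Nat.pow_le_pow_right (by norm_num) hc2
    have h2 : (17:ℕ)^2 = 289 := by norm_num
    omega
  -- 7 part
  have h7σ : (7:ℕ)^(α₂-1) ∣ σv := by
    have h1 : (7:ℕ)^α₂ ∣ 13*n := Dvd.dvd.mul_left h7bn 13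
    rw [← k7] at h1
    have h2 : (7:ℕ)^(α₂-1)*7 ∣ σv*7 := by
      rw [show (7:ℕ)^(α₂-1)*7 = 7^(α₂-1+1) from (pow_succ 7 _).symm, show α₂-1+1 = α₂ by omega]
      rwa [mul_comm] at h1
    exact (Nat.mul_dvd_mul_iff_right (by norm_num : (0:ℕ) < 7)).mp h2
  have n7A : ¬ (7:ℕ) ∣ A := by
    intro h
    have := C7 3 (α₁+1) hoa (hAdef ▸ h)
    revert this; decide
  have n7B : ¬ (7:ℕ) ∣ B := fun h => L_self 7 α₂ (by norm_num) (hBdef ▸ h)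
  have n7C : ¬ (7:ℕ) ∣ C := by
    intro h
    have := C7 17 (α₃+1) hoc (hCdef ▸ h)
    revert this; decide
  have n7ABC : ¬ (7:ℕ) ∣ A*B*C := by
    intro h
    rcases (Nat.Prime.dvd_mul p7).mp h with h'|h'
    · rcases (Nat.Prime.dvd_mul p7).mp h' with h''|h''
      · exact n7A h''
      · exact n7B h''
    · exact n7C h'
  have h7E : (7:ℕ)^(α₂-1) ∣ E :=
    (Nat.Coprime.pow_left _ ((Nat.Prime.coprime_iff_not_dvd p7).mpr n7ABC)).dvd_of_dvd_mul_left
      (hσv ▸ h7σ)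
  have h7dvdE : (7:ℕ) ∣ E := (dvd_pow_self 7 (by omega : α₂-1 ≠ 0)).trans h7E
  have hp37 : (p : ZMod 7)^3 = 1 := C7 p (α₄+1) hoe (hEdef ▸ h7dvdE)
  have hp3mod : p^3 % 7 = 1 := by
    have h1 : ((p^3 : ℕ) : ZMod 7) = ((1:ℕ) : ZMod 7) := by push_cast [hp37]; norm_num
    have h2 := (ZMod.natCast_eq_natCast_iff _ _ _).mp h1
    unfold Nat.ModEq at h2
    omega
  have hp3pos : 1 ≤ p^3 := Nat.one_le_pow _ _ (by omega)
  have hp3p : p ≤ p^3 := Nat.le_self_pow (by norm_num) p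
  have iX : S (p^3) (α₄+1) * (p^3-1) + 1 = (p^3)^(α₄+1) := by
    have h1 := Sid (p^3-1) (α₄+1)
    rwa [show p^3 - 1 + 1 = p^3 by omega] at h1
  have hEX : E ∣ S (p^3) (α₄+1) * (p^3-1) := by
    have hcube : (p^3)^(α₄+1) = (E*(p-1)+1)^3 := by
      rw [iE, ← pow_mul, ← pow_mul, mul_comm 3 (α₄+1)]
    have h1 : S (p^3) (α₄+1) * (p^3-1) + 1 = (E*(p-1))*((E*(p-1))*(E*(p-1))+3*(E*(p-1))+3) + 1 := by
      rw [iX, hcube]; ring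
    have h3 := Nat.add_right_cancel h1
    exact ⟨(p-1)*((E*(p-1))*(E*(p-1))+3*(E*(p-1))+3), by rw [h3]; ring⟩
  have h7X : (7:ℕ)^(α₂-1) ∣ S (p^3) (α₄+1) * (p^3-1) := h7E.trans hEX
  have hS30 : S (p^3) (α₄+1) ≠ 0 := by
    have := S_pos (p^3) (α₄+1) hp3pos (by omega)
    omega
  have hp310 : p^3 - 1 ≠ 0 := by omega
  have hble : α₂ - 1 ≤ (Nat.factorization (S (p^3) (α₄+1))) 7 + (Nat.factorization (p^3-1)) 7 := by
    have h1 := (Nat.Prime.pow_dvd_iff_le_factorization p7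
      (Nat.mul_ne_zero hS30 hp310)).mp h7X
    rwa [Nat.factorization_mul hS30 hp310, Finsupp.add_apply] at h1
  have h7f1 : (7:ℕ)^((Nat.factorization (p^3-1)) 7) ≤ p^3 :=
    le_trans (Nat.le_of_dvd (by omega) (Nat.ordProj_dvd _ 7)) (by omega)
  have h7f2 : (7:ℕ)^((Nat.factorization (S (p^3) (α₄+1))) 7) ≤ α₄+1 :=
    Nat.le_of_dvd (by omega)
      (L1 7 p7 (by decide) _ (p^3) (α₄+1) hp3mod (Nat.ordProj_dvd _ 7))
  have b_bound : (7:ℕ)^(α₂-1) ≤ p^3*(α₄+1) := by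
    calc (7:ℕ)^(α₂-1)
        ≤ 7^((Nat.factorization (S (p^3) (α₄+1))) 7 + (Nat.factorization (p^3-1)) 7) :=
          Nat.pow_le_pow_right (by norm_num) hble
    _ = 7^((Nat.factorization (p^3-1)) 7) * 7^((Nat.factorization (S (p^3) (α₄+1))) 7) := by
          rw [pow_add]; ring
    _ ≤ p^3*(α₄+1) := Nat.mul_le_mul h7f1 h7f2
  -- 3 part
  have h3σ : (3:ℕ)^α₁ ∣ σv := by
    have h1 : (3:ℕ)^α₁ ∣ 13*n := Dvd.dvd.mul_left h3an 13
    rw [← k7] at h1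
    exact Nat.Coprime.dvd_of_dvd_mul_left (Nat.Coprime.pow_left _ (by norm_num)) h1
  have n3A : ¬ (3:ℕ) ∣ A := fun h => L_self 3 α₁ (by norm_num) (hAdef ▸ h)
  have n3C : ¬ (3:ℕ) ∣ C := by
    intro h
    have := C3 17 (α₃+1) hoc (hCdef ▸ h)
    revert this; decide
  have n3AC : ¬ (3:ℕ) ∣ A*C := by
    intro h
    rcases (Nat.Prime.dvd_mul p3).mp h with h'|h'
    · exact n3A h'
    · exact n3C h'
  have h3BE : (3:ℕ)^α₁ ∣ B*E := by
    have h1 : (3:ℕ)^α₁ ∣ (A*C)*(B*E) := by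
      rw [show (A*C)*(B*E) = A*B*C*E by ring, ← hσv]; exact h3σ
    exact (Nat.Coprime.pow_left _ ((Nat.Prime.coprime_iff_not_dvd p3).mpr n3AC)).dvd_of_dvd_mul_left h1
  have hB0 : B ≠ 0 := by omega
  have hE0 : E ≠ 0 := by omega
  have hale : α₁ ≤ (Nat.factorization B) 3 + (Nat.factorization E) 3 := by
    have h1 := (Nat.Prime.pow_dvd_iff_le_factorization p3 (Nat.mul_ne_zero hB0 hE0)).mp h3BE
    rwa [Nat.factorization_mul hB0 hE0, Finsupp.add_apply] at h1
  have h3g1 : (3:ℕ)^((Nat.factorization B) 3) ≤ α₂+1 := by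
    have hd : (3:ℕ)^((Nat.factorization B) 3) ∣ S 7 (α₂+1) := by
      rw [← hBdef]; exact Nat.ordProj_dvd _ 3
    have := L1 3 p3 (by decide) _ 7 (α₂+1) (by norm_num) hd
    exact Nat.le_of_dvd (by omega) this
  have h3g2 : (3:ℕ)^((Nat.factorization E) 3) ≤ α₄+1 := by
    rcases Nat.eq_zero_or_pos ((Nat.factorization E) 3) with h0 | h0
    · rw [h0]; simp
    · have hd : (3:ℕ)^((Nat.factorization E) 3) ∣ S p (α₄+1) := by
        rw [← hEdef]; exact Nat.ordProj_dvd _ 3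
      have h3E : (3:ℕ) ∣ E := by
        rw [hEdef]
        exact (dvd_pow_self 3 (by omega : (Nat.factorization E) 3 ≠ 0)).trans hd
      have hp3' := C3 p (α₄+1) hoe (hEdef ▸ h3E)
      have hpm3 : p % 3 = 1 := by
        have h1 : ((p:ℕ) : ZMod 3) = ((1:ℕ) : ZMod 3) := by rw [hp3']; norm_num
        have h2 := (ZMod.natCast_eq_natCast_iff _ _ _).mp h1
        unfold Nat.ModEq at h2
        omega
      have := L1 3 p3 (by decide) _ p (α₄+1) hpm3 hd
      exact Nat.le_of_dvd (by omega) this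
  have a_bound : (3:ℕ)^α₁ ≤ (α₂+1)*(α₄+1) := by
    calc (3:ℕ)^α₁ ≤ 3^((Nat.factorization B) 3 + (Nat.factorization E) 3) :=
          Nat.pow_le_pow_right (by norm_num) hale
    _ = 3^((Nat.factorization B) 3)*3^((Nat.factorization E) 3) := pow_add 3 _ _
    _ ≤ (α₂+1)*(α₄+1) := Nat.mul_le_mul h3g1 h3g2
  -- p part
  have hpσ : p^α₄ ∣ σv := by
    have h1 : p^α₄ ∣ 13*n := Dvd.dvd.mul_left hpen 13
    rw [← k7] at h1
    exact Nat.Coprime.dvd_of_dvd_mul_left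
      (Nat.Coprime.pow_left _ ((Nat.coprime_primes hp p7).mpr (by omega))) h1
  have npE : ¬ p ∣ E := fun h => L_self p α₄ (by omega) (hEdef ▸ h)
  have hpABC : p^α₄ ∣ A*B*C :=
    (Nat.Coprime.pow_left _ ((Nat.Prime.coprime_iff_not_dvd hp).mpr npE)).dvd_of_dvd_mul_right
      (hσv ▸ hpσ)
  have pe_ABC : p^α₄ ≤ A*B*C :=
    Nat.le_of_dvd (Nat.mul_pos (Nat.mul_pos (by omega) (by omega)) (by omega)) hpABC
  -- numeric chain
  have key3 : (A*2)*((B*6)*(C*16)) < (A*2+1)*((B*6+1)*(C*16+1)) :=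
    prod_lt3 (A*2) (B*6) (C*16) (by omega)
  rw [iA] at key3
  rw [show (B*6+1)*(C*16+1) = (B*6+1)*(C*16+1) from rfl] at key3
  rw [iB, iC] at key3
  have h192 : 192*(p^α₄) < 3^(α₁+1)*(7^(α₂+1)*17^(α₃+1)) := by
    calc 192*(p^α₄) ≤ 192*(A*B*C) := Nat.mul_le_mul (le_refl 192) pe_ABC
    _ = (A*2)*((B*6)*(C*16)) := by ring
    _ < 3^(α₁+1)*(7^(α₂+1)*17^(α₃+1)) := key3
  have bp1 : α₂+1 ≤ 7^(α₂-1) := by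
    have h1 := le_pow7 (α₂-2)
    have h2 : α₂-2+3 = α₂+1 := by omega
    have h3 : α₂-2+1 = α₂-1 := by omega
    rwa [h2, h3] at h1
  have bp2 : α₂+1 ≤ p^3*(α₄+1) := le_trans bp1 b_bound
  have hB7 : 7^α₂ ≤ 7*(p^3*(α₄+1)) := by
    have h1 : (7:ℕ)^α₂ = 7^(α₂-1)*7 := by rw [← pow_succ, show α₂-1+1 = α₂ by omega]
    rw [h1]
    calc (7:ℕ)^(α₂-1)*7 ≤ (p^3*(α₄+1))*7 := Nat.mul_le_mul b_bound (le_refl 7)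
    _ = 7*(p^3*(α₄+1)) := by ring
  have hA3 : 3^α₁ ≤ (p^3*(α₄+1))*(α₄+1) :=
    le_trans a_bound (Nat.mul_le_mul bp2 (le_refl _))
  have hchain : 3^α₁*(7^α₂*17^α₃) ≤ ((p^3*(α₄+1))*(α₄+1))*((7*(p^3*(α₄+1)))*(α₄+1)) :=
    Nat.mul_le_mul hA3 (Nat.mul_le_mul hB7 c_bound)
  have hfin : 192*(p^α₄) < 2499*(p^6*(α₄+1)^4) := by
    calc 192*(p^α₄) < 3^(α₁+1)*(7^(α₂+1)*17^(α₃+1)) := h192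
    _ = 357*(3^α₁*(7^α₂*17^α₃)) := by rw [pow_succ, pow_succ, pow_succ]; ring
    _ ≤ 357*(((p^3*(α₄+1))*(α₄+1))*((7*(p^3*(α₄+1)))*(α₄+1))) :=
          Nat.mul_le_mul (le_refl 357) hchain
    _ = 2499*(p^6*(α₄+1)^4) := by ring
  have hge : 2499*(p^6*(α₄+1)^4) ≤ 192*(p^α₄) := by
    have hsplit : p^α₄ = p^6 * p^(α₄-6) := by
      rw [← pow_add, show 6+(α₄-6) = α₄ by omega]
    have key : 2499*((α₄+1)^4) ≤ 192*(p^(α₄-6)) := by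
      have hQ2 : α₄+1 ≤ 2^α₄ := (Nat.lt_two_pow_self (n := α₄))
      have s1 : (α₄+1)^4 ≤ (2^α₄)^4 := Nat.pow_le_pow_left hQ2 4
      have s2 : 2499*((α₄+1)^4) ≤ 2^12*((2:ℕ)^α₄)^4 :=
        Nat.mul_le_mul (by norm_num) s1
      have s3 : (2:ℕ)^12*((2:ℕ)^α₄)^4 = 2^(12+4*α₄) := by
        rw [← pow_mul, ← pow_add]; ring_nf
      have s4 : (2:ℕ)^(12+4*α₄) ≤ 2^(6*(α₄-6)) :=
        Nat.pow_le_pow_right (by norm_num) (by omega)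
      have s5 : (2:ℕ)^(6*(α₄-6)) = 64^(α₄-6) := by
        rw [pow_mul]; norm_num
      have s6 : (64:ℕ)^(α₄-6) ≤ p^(α₄-6) := Nat.pow_le_pow_left (by omega) _
      calc 2499*((α₄+1)^4) ≤ 2^12*((2:ℕ)^α₄)^4 := s2
      _ = 2^(12+4*α₄) := s3
      _ ≤ 2^(6*(α₄-6)) := s4
      _ = 64^(α₄-6) := s5
      _ ≤ p^(α₄-6) := s6
      _ ≤ 192*(p^(α₄-6)) := Nat.le_mul_of_pos_left _ (by norm_num)
    calc 2499*(p^6*(α₄+1)^4) = (2499*((α₄+1)^4))*p^6 := by ring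
    _ ≤ (192*(p^(α₄-6)))*p^6 := Nat.mul_le_mul key (le_refl _)
    _ = 192*(p^α₄) := by rw [hsplit]; ring
  omega

set_option maxHeartbeats 2000000 in
theorem stmt14 (p : ℕ) (hp : p.Prime) (hpq : 17 < p)
    (α₁ α₂ α₃ α₄ : ℕ) (hα₁ : 0 < α₁) (hα₂ : 0 < α₂) (hα₃ : 0 < α₃) (hα₄ : 0 < α₄)
    (n : ℕ) (hn : n = 3 ^ α₁ * 7 ^ α₂ * 17 ^ α₃ * p ^ α₄)
    (hodd : Odd n)
    (d : ℕ) (hdvd : d ∣ n) (hlt : d < n)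
    (hσ : ArithmeticFunction.sigma 1 n = 2 * n - d)
    (hD : 7 ≤ n / d) :
    False := by
  -- basic numbers
  have p3 : Nat.Prime 3 := by norm_num
  have p7 : Nat.Prime 7 := by norm_num
  have p17 : Nat.Prime 17 := by norm_num
  have hp19 : 19 ≤ p := by
    rcases Nat.lt_or_ge p 19 with h | h
    · interval_cases p <;> revert hp <;> decide
    · exact h
  have hn0 : 0 < n := by rw [hn]; positivity
  have hd0 : 0 < d := by
    rcases Nat.eq_zero_or_pos d with h | h
    · subst h; rw [zero_dvd_iff] at hdvd; omega
    · exact h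
  set D := n / d with hDdef
  clear_value D
  have hdD : d * D = n := by rw [hDdef]; exact Nat.mul_div_cancel' hdvd
  have hDn : D ∣ n := Dvd.intro_left d hdD
  have hD0 : 0 < D := by nlinarith
  -- coprimality of p with 3,7,17
  have hpne3 : p ≠ 3 := by omega
  have hpne7 : p ≠ 7 := by omega
  have hpne17 : p ≠ 17 := by omega
  have cop37 : Nat.Coprime 3 7 := by norm_num
  have cop317 : Nat.Coprime 3 17 := by norm_num
  have cop717 : Nat.Coprime 7 17 := by norm_num
  have cop3p : Nat.Coprime 3 p := (Nat.coprime_primes p3 hp).mpr (by omega)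
  have cop7p : Nat.Coprime 7 p := (Nat.coprime_primes p7 hp).mpr (by omega)
  have cop17p : Nat.Coprime 17 p := (Nat.coprime_primes p17 hp).mpr (by omega)
  -- sigma splits
  obtain ⟨A, hAdef⟩ : ∃ t, t = S 3 (α₁+1) := ⟨_, rfl⟩
  obtain ⟨B, hBdef⟩ : ∃ t, t = S 7 (α₂+1) := ⟨_, rfl⟩
  obtain ⟨C, hCdef⟩ : ∃ t, t = S 17 (α₃+1) := ⟨_, rfl⟩
  obtain ⟨E, hEdef⟩ : ∃ t, t = S p (α₄+1) := ⟨_, rfl⟩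
  have hsigma : ArithmeticFunction.sigma 1 n = A * B * C * E := by
    rw [hAdef, hBdef, hCdef, hEdef, hn]
    rw [ArithmeticFunction.isMultiplicative_sigma.map_mul_of_coprime
      (Nat.Coprime.mul (Nat.Coprime.mul ((cop3p.pow_right _).pow_left _)
        ((cop7p.pow_right _).pow_left _)) ((cop17p.pow_right _).pow_left _))]
    rw [ArithmeticFunction.isMultiplicative_sigma.map_mul_of_coprime
      (Nat.Coprime.mul ((cop317.pow_right _).pow_left _) ((cop717.pow_right _).pow_left _))]
    rw [ArithmeticFunction.isMultiplicative_sigma.map_mul_of_coprime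
      ((cop37.pow_right _).pow_left _)]
    rw [sigma_pp 3 α₁ p3, sigma_pp 7 α₂ p7, sigma_pp 17 α₃ p17, sigma_pp p α₄ hp]
  obtain ⟨σv, hσv⟩ : ∃ t, t = A * B * C * E := ⟨_, rfl⟩
  have hsum : σv + d = 2 * n := by
    rw [hσv, ← hsigma]
    omega
  -- positivity of factors
  have hA1 : 1 ≤ A := hAdef ▸ S_pos 3 _ (by norm_num) (by omega)
  have hB1 : 1 ≤ B := hBdef ▸ S_pos 7 _ (by norm_num) (by omega)
  have hC1 : 1 ≤ C := hCdef ▸ S_pos 17 _ (by norm_num) (by omega)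
  have hE1 : 1 ≤ E := hEdef ▸ S_pos p _ (by omega) (by omega)
  -- parity: all exponents even
  have hdodd : d % 2 = 1 := by
    obtain ⟨k, hk⟩ := hdvd
    rw [Nat.odd_iff, hk, Nat.mul_mod] at hodd
    rcases Nat.mod_two_eq_zero_or_one d with h | h <;> simp [h] at hodd ⊢
  have hσodd : σv % 2 = 1 := by omega
  have hABCE : Odd (A * B * C * E) := by rw [← hσv, Nat.odd_iff]; exact hσodd
  have hAodd : Odd A := ((Nat.odd_mul.mp ((Nat.odd_mul.mp ((Nat.odd_mul.mp hABCE).1)).1)).1)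
  have hBodd : Odd B := ((Nat.odd_mul.mp ((Nat.odd_mul.mp ((Nat.odd_mul.mp hABCE).1)).1)).2)
  have hCodd : Odd C := (Nat.odd_mul.mp ((Nat.odd_mul.mp hABCE).1)).2
  have hEodd : Odd E := (Nat.odd_mul.mp hABCE).2
  have hpodd : p % 2 = 1 := Nat.odd_iff.mp (hp.odd_of_ne_two (by omega))
  have hoa : Odd (α₁+1) := S_parity 3 _ (by norm_num) (hAdef ▸ hAodd)
  have hob : Odd (α₂+1) := S_parity 7 _ (by norm_num) (hBdef ▸ hBodd)
  have hoc : Odd (α₃+1) := S_parity 17 _ (by norm_num) (hCdef ▸ hCodd)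
  have hoe : Odd (α₄+1) := S_parity p _ hpodd (hEdef ▸ hEodd)
  have hb2 : 2 ≤ α₂ := by rw [Nat.odd_iff] at hob; omega
  have hc2 : 2 ≤ α₃ := by rw [Nat.odd_iff] at hoc; omega
  have he2 : 2 ≤ α₄ := by rw [Nat.odd_iff] at hoe; omega
  -- identities
  have iA : A * 2 + 1 = 3^(α₁+1) := hAdef ▸ Sid 2 (α₁+1)
  have iB : B * 6 + 1 = 7^(α₂+1) := hBdef ▸ Sid 6 (α₂+1)
  have iC : C * 16 + 1 = 17^(α₃+1) := hCdef ▸ Sid 16 (α₃+1)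
  have iE : E * (p-1) + 1 = p^(α₄+1) := by
    have h1 := Sid (p-1) (α₄+1)
    rw [show p - 1 + 1 = p by omega] at h1
    rw [hEdef]
    exact h1
  -- the global sigma bound
  have Hσn : 192*(p-1)*σv < 357*(p*n) := by
    have key : (A*2)*((B*6)*((C*16)*(E*(p-1)))) <
        (A*2+1)*((B*6+1)*((C*16+1)*(E*(p-1)+1))) :=
      prod_lt4 (A*2) (B*6) (C*16) (E*(p-1)) (by omega) (by omega)
    rw [iA] at key
    rw [show (B*6+1)*((C*16+1)*(E*(p-1)+1)) = (B*6+1)*(C*16+1)*(E*(p-1)+1) by ring] at key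
    rw [iB, iC, iE] at key
    calc 192*(p-1)*σv = (A*2)*((B*6)*((C*16)*(E*(p-1)))) := by rw [hσv]; ring
    _ < (3^(α₁+1))*(7^(α₂+1)*17^(α₃+1)*p^(α₄+1)) := key
    _ = 357*(p*n) := by rw [hn, pow_succ, pow_succ, pow_succ, pow_succ]; ring
  -- key equation
  set M := 2*D - 1 with hMdef
  clear_value M
  have hM : M + 1 = 2*D := by omega
  have hKE2 : D * σv = M * n := by
    have h2 := congrArg (HMul.hMul D) hsum
    rw [Nat.mul_add, show D * d = n by rw [mul_comm]; exact hdD] at h2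
    have h4 : D * (2*n) = M*n + n := by
      rw [show M*n + n = (M+1)*n by ring, hM]; ring
    rw [h4] at h2
    exact Nat.add_right_cancel h2
  have hbound : 192*((p-1)*M) < 357*(p*D) := by
    have h1 : (192*(p-1)*σv)*D < (357*(p*n))*D :=
      (Nat.mul_lt_mul_right hD0).mpr Hσn
    have h2 : (192*(p-1)*σv)*D = (192*((p-1)*M))*n := by
      rw [show (192*(p-1)*σv)*D = 192*(p-1)*(D*σv) by ring, hKE2]; ring
    have h3 : (357*(p*n))*D = (357*(p*D))*n := by ring
    rw [h2, h3] at h1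
    exact Nat.lt_of_mul_lt_mul_right h1
  -- D ≤ 26
  have hD26 : D ≤ 26 := by
    by_contra hcon
    push_neg at hcon
    exact boundD p D M hp19 (by omega) hM hbound
  -- D odd
  have hDodd : D % 2 = 1 := by
    obtain ⟨k, hk⟩ := hDn
    rw [Nat.odd_iff, hk, Nat.mul_mod] at hodd
    rcases Nat.mod_two_eq_zero_or_one D with h | h <;> simp [h] at hodd ⊢
  -- prime divisors of n
  have hPD : ∀ q : ℕ, q.Prime → q ∣ n → q = 3 ∨ q = 7 ∨ q = 17 ∨ q = p := by
    intro q hq hqn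
    rw [hn] at hqn
    rcases (Nat.Prime.dvd_mul hq).mp hqn with h | h
    · rcases (Nat.Prime.dvd_mul hq).mp h with h' | h'
      · rcases (Nat.Prime.dvd_mul hq).mp h' with h'' | h''
        · exact Or.inl ((Nat.prime_dvd_prime_iff_eq hq p3).mp (hq.dvd_of_dvd_pow h''))
        · exact Or.inr (Or.inl ((Nat.prime_dvd_prime_iff_eq hq p7).mp (hq.dvd_of_dvd_pow h'')))
      · exact Or.inr (Or.inr (Or.inl ((Nat.prime_dvd_prime_iff_eq hq p17).mp (hq.dvd_of_dvd_pow h'))))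
    · exact Or.inr (Or.inr (Or.inr ((Nat.prime_dvd_prime_iff_eq hq hp).mp (hq.dvd_of_dvd_pow h))))
  -- prime power divisors of n
  have h3an : 3^α₁ ∣ n := ⟨7^α₂*17^α₃*p^α₄, by rw [hn]; ring⟩
  have h7bn : 7^α₂ ∣ n := ⟨3^α₁*17^α₃*p^α₄, by rw [hn]; ring⟩
  have h17cn : 17^α₃ ∣ n := ⟨3^α₁*7^α₂*p^α₄, by rw [hn]; ring⟩
  have hpen : p^α₄ ∣ n := ⟨3^α₁*7^α₂*17^α₃, by rw [hn]; ring⟩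
  have h17n : (17:ℕ) ∣ n := (dvd_pow_self 17 (by omega : α₃ ≠ 0)).trans h17cn
  -- non-divisibility facts
  have n17A : ¬ (17:ℕ) ∣ A := by
    intro h
    have := C17 3 (α₁+1) hoa (hAdef ▸ h)
    revert this; decide
  have n17B : ¬ (17:ℕ) ∣ B := by
    intro h
    have := C17 7 (α₂+1) hob (hBdef ▸ h)
    revert this; decide
  have n17C : ¬ (17:ℕ) ∣ C := by
    intro h
    exact L_self 17 α₃ (by norm_num) (hCdef ▸ h)
  -- 17 ∣ σv implies p ≡ 1 mod 17, hence p ≥ 103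
  have h17σ : (17:ℕ) ∣ σv → p % 17 = 1 := by
    intro h17
    rw [hσv] at h17
    rcases (Nat.Prime.dvd_mul p17).mp h17 with h | h
    · rcases (Nat.Prime.dvd_mul p17).mp h with h' | h'
      · rcases (Nat.Prime.dvd_mul p17).mp h' with h'' | h''
        · exact absurd h'' n17A
        · exact absurd h'' n17B
      · exact absurd h' n17C
    · have hp17 := C17 p (α₄+1) hoe (hEdef ▸ h)
      have h1 : ((p : ℕ) : ZMod 17) = ((1:ℕ) : ZMod 17) := by rw [hp17]; simp
      have h2 : p ≡ 1 [MOD 17] := (ZMod.natCast_eq_natCast_iff _ _ _).mp h1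
      unfold Nat.ModEq at h2
      omega
  have hP103 : p % 17 = 1 → 103 ≤ p := by
    intro h
    by_contra hcon
    push_neg at hcon
    have : p = 35 ∨ p = 69 := by omega
    rcases this with rfl | rfl <;> revert hp <;> decide
  -- now case on D
  clear hσ hsigma hsum hσodd hABCE hAodd hBodd hCodd hEodd iA iB iC iE Hσn
  clear hA1 hB1 hC1 hE1 cop37 cop317 cop717 cop3p cop7p cop17p
  clear hdodd hdvd hlt hd0 hdD hDdef hn hodd hn0 hpodd hD0
  have hDcase : D = 7 ∨ D = 9 ∨ D = 11 ∨ D = 13 ∨ D = 15 ∨ D = 17 ∨ D = 19 ∨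
      D = 21 ∨ D = 23 ∨ D = 25 := by omega
  clear hD hD26 hDodd
  rcases hDcase with rfl|rfl|rfl|rfl|rfl|rfl|rfl|rfl|rfl|rfl
  -- D = 7 : the hard case
  · have hM13 : M = 13 := by omega
    rw [hM13] at hKE2
    exact case7 p α₁ α₂ α₃ α₄ n σv A B C E hp hpq hoa hob hoc hoe hb2 hc2
      hAdef hBdef hCdef hEdef hσv h3an h7bn h17cn hpen (by omega)
  -- D = 9
  · have hM17 : M = 17 := by omega
    rw [hM17] at hKE2 hbound
    have h1 : (17:ℕ) ∣ 9*σv := by rw [hKE2]; exact Dvd.intro n rfl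
    have h2 : (17:ℕ) ∣ σv := (Nat.Coprime.dvd_of_dvd_mul_left (by norm_num) h1)
    have := hP103 (h17σ h2)
    omega
  -- D = 11
  · rcases hPD 11 (by norm_num) hDn with h|h|h|h <;> omega
  -- D = 13
  · rcases hPD 13 (by norm_num) hDn with h|h|h|h <;> omega
  -- D = 15
  · have h5 : (5:ℕ) ∣ n := dvd_trans (by norm_num) hDn
    rcases hPD 5 (by norm_num) h5 with h|h|h|h <;> omega
  -- D = 17
  · have hM33 : M = 33 := by omega
    rw [hM33] at hKE2 hbound
    obtain ⟨w, hw⟩ : (289:ℕ) ∣ n := by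
      have : (17:ℕ)^2 ∣ 17^α₃ := pow_dvd_pow 17 hc2
      exact (by norm_num : (17:ℕ)^2 = 289) ▸ this.trans h17cn
    have hσw : σv = 561*w := by rw [hw] at hKE2; omega
    have h2 : (17:ℕ) ∣ σv := ⟨33*w, by omega⟩
    have := hP103 (h17σ h2)
    omega
  -- D = 19
  · have hp19' : p = 19 := by rcases hPD 19 (by norm_num) hDn with h|h|h|h <;> omega
    have hM37 : M = 37 := by omega
    rw [hM37] at hKE2
    have h1 : (17:ℕ) ∣ 19*σv := by rw [hKE2]; exact Dvd.dvd.mul_left h17n 37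
    have h2 : (17:ℕ) ∣ σv := (Nat.Coprime.dvd_of_dvd_mul_left (by norm_num) h1)
    have := h17σ h2
    omega
  -- D = 21
  · have hM41 : M = 41 := by omega
    rw [hM41] at hKE2 hbound
    have h1 : (17:ℕ) ∣ 21*σv := by rw [hKE2]; exact Dvd.dvd.mul_left h17n 41
    have h2 : (17:ℕ) ∣ σv := (Nat.Coprime.dvd_of_dvd_mul_left (by norm_num) h1)
    have := hP103 (h17σ h2)
    omega
  -- D = 23
  · have hp23 : p = 23 := by rcases hPD 23 (by norm_num) hDn with h|h|h|h <;> omega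
    have hM45 : M = 45 := by omega
    rw [hM45, hp23] at hbound
    omega
  -- D = 25
  · have h5 : (5:ℕ) ∣ n := dvd_trans (by norm_num) hDn
    rcases hPD 5 (by norm_num) h5 with h|h|h|h <;> omega
end

section
/- There is no odd deficient-perfect number of the form n = 3^{α1} · 7^{α2} · 29^{α3} · p^{α4} with deficient divisor d satisfying n/d ≥ 7, where p is a prime with p > 29 and α1, α2, α3, α4 are positive integers. That is, no such n admits a proper divisor d with σ(n) = 2n - d and n/d ≥ 7. -/
open Finset

private lemma geoNat (q k : ℕ) :
    q * (∑ i ∈ range (k+1), q^i) + 1 = (∑ i ∈ range (k+1), q^i) + q^(k+1) := by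
  induction k with
  | zero => simp [Nat.add_comm]
  | succ k ih =>
    rw [sum_range_succ]
    calc q * ((∑ i ∈ range (k+1), q^i) + q^(k+1)) + 1
        = (q * (∑ i ∈ range (k+1), q^i) + 1) + q * q^(k+1) := by ring
      _ = ((∑ i ∈ range (k+1), q^i) + q^(k+1)) + q * q^(k+1) := by rw [ih]
      _ = ((∑ i ∈ range (k+1), q^i) + q^(k+1)) + q^(k+1+1) := by ring

private lemma sum_pow_cast_one (m k x : ℕ) (hx : ((x : ℕ) : ZMod m) = 1) :
    ((∑ i ∈ range (k+1), x^i : ℕ) : ZMod m) = ((k+1 : ℕ) : ZMod m) := by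
  rw [Nat.cast_sum]
  rw [Finset.sum_congr rfl (fun i _ => by rw [Nat.cast_pow, hx, one_pow])]
  simp

private lemma odd_pow_ne (T P : ℕ) (y : ZMod P) (hT : 0 < T) (h2 : 2 ∣ T)
    (hxT : y^T = 1)
    (hall : ∀ r < T, r % 2 = 1 → y^r ≠ 1)
    (m : ℕ) (hm : m % 2 = 1) : y^m ≠ 1 := by
  intro h
  have hmod : y^(m % T) = 1 := by
    conv at h => rw [← Nat.div_add_mod m T]
    rw [pow_add, pow_mul, hxT, one_pow, one_mul] at h
    exact h
  have h22 : m % T % 2 = m % 2 := Nat.mod_mod_of_dvd m h2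
  exact hall (m % T) (Nat.mod_lt _ hT) (by omega) hmod

theorem stmt17 (p : ℕ) (hp : p.Prime) (hpq : 29 < p)
    (α₁ α₂ α₃ α₄ : ℕ) (hα₁ : 0 < α₁) (hα₂ : 0 < α₂) (hα₃ : 0 < α₃) (hα₄ : 0 < α₄)
    (n : ℕ) (hn : n = 3 ^ α₁ * 7 ^ α₂ * 29 ^ α₃ * p ^ α₄)
    (hodd : Odd n)
    (d : ℕ) (hdvd : d ∣ n) (hlt : d < n)
    (hσ : ArithmeticFunction.sigma 1 n = 2 * n - d)
    (hD : 7 ≤ n / d) :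
    False := by
  have hp31 : 31 ≤ p := by
    rcases Nat.lt_or_ge p 31 with h | h
    · exfalso; have : p = 30 := by omega
      rw [this] at hp; norm_num at hp
    · exact h
  obtain ⟨m, rfl⟩ : ∃ m, p = m + 1 := ⟨p - 1, by omega⟩
  have hm30 : 30 ≤ m := by omega
  have p3 : Nat.Prime 3 := by norm_num
  have p7 : Nat.Prime 7 := by norm_num
  have p29 : Nat.Prime 29 := by norm_num
  -- coprimality
  have c37 : Nat.Coprime (3^α₁) (7^α₂) := Nat.Coprime.pow α₁ α₂ (by decide)
  have c3_29 : Nat.Coprime (3^α₁) (29^α₃) := Nat.Coprime.pow _ _ (by decide)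
  have c7_29 : Nat.Coprime (7^α₂) (29^α₃) := Nat.Coprime.pow _ _ (by decide)
  have c3p : Nat.Coprime (3^α₁) ((m+1)^α₄) :=
    Nat.Coprime.pow _ _ ((Nat.coprime_primes p3 hp).mpr (by omega))
  have c7p : Nat.Coprime (7^α₂) ((m+1)^α₄) :=
    Nat.Coprime.pow _ _ ((Nat.coprime_primes p7 hp).mpr (by omega))
  have c29p : Nat.Coprime (29^α₃) ((m+1)^α₄) :=
    Nat.Coprime.pow _ _ ((Nat.coprime_primes p29 hp).mpr (by omega))
  -- sigma splits
  have hmul := ArithmeticFunction.isMultiplicative_sigma (k := 1)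
  have hσs : ArithmeticFunction.sigma 1 n =
      (∑ i ∈ range (α₁+1), 3^i) * (∑ i ∈ range (α₂+1), 7^i) *
      (∑ i ∈ range (α₃+1), 29^i) * (∑ i ∈ range (α₄+1), (m+1)^i) := by
    rw [hn, hmul.map_mul_of_coprime (Nat.Coprime.mul (c3p.mul c7p) c29p),
      hmul.map_mul_of_coprime (c3_29.mul c7_29),
      hmul.map_mul_of_coprime c37,
      ArithmeticFunction.sigma_one_apply_prime_pow p3,
      ArithmeticFunction.sigma_one_apply_prime_pow p7,
      ArithmeticFunction.sigma_one_apply_prime_pow p29,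
      ArithmeticFunction.sigma_one_apply_prime_pow hp]
  have g3 := geoNat 3 α₁
  have g7 := geoNat 7 α₂
  have g29 := geoNat 29 α₃
  have gp := geoNat (m+1) α₄
  have m2 := sum_pow_cast_one 2 α₃ 29 (by decide)
  have m7 := sum_pow_cast_one 7 α₃ 29 (by decide)
  have hbig : 29 ≤ ∑ i ∈ range (α₃+1), 29^i := by
    calc (29:ℕ) = 29^1 := (pow_one 29).symm
      _ ≤ 29^α₃ := Nat.pow_le_pow_right (by norm_num) hα₃
      _ ≤ ∑ i ∈ range (α₃+1), 29^i :=
          Finset.single_le_sum (f := fun i => (29:ℕ)^i) (fun i _ => Nat.zero_le _)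
            (self_mem_range_succ α₃)
  -- abstract sums
  obtain ⟨S3, hS3⟩ : ∃ S, (∑ i ∈ range (α₁+1), (3:ℕ)^i) = S := ⟨_, rfl⟩
  obtain ⟨S7, hS7⟩ : ∃ S, (∑ i ∈ range (α₂+1), (7:ℕ)^i) = S := ⟨_, rfl⟩
  obtain ⟨S29, hS29⟩ : ∃ S, (∑ i ∈ range (α₃+1), (29:ℕ)^i) = S := ⟨_, rfl⟩
  obtain ⟨Sp, hSp⟩ : ∃ S, (∑ i ∈ range (α₄+1), (m+1:ℕ)^i) = S := ⟨_, rfl⟩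
  rw [hS3] at hσs g3
  rw [hS7] at hσs g7
  rw [hS29] at hσs g29 m2 m7 hbig
  rw [hSp] at hσs gp
  -- inequalities
  have i3 : 2 * S3 < 3^(α₁+1) := by omega
  have i7 : 6 * S7 < 7^(α₂+1) := by omega
  have i29 : 28 * S29 < 29^(α₃+1) := by omega
  have ip : m * Sp < (m+1)^(α₄+1) := by
    have h1 : (m+1)*Sp = m*Sp + Sp := by ring
    omega
  have hub : (2*S3)*((6*S7)*((28*S29)*(m*Sp))) <
      3^(α₁+1)*(7^(α₂+1)*(29^(α₃+1)*(m+1)^(α₄+1))) := by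
    exact mul_lt_mul'' i3 (mul_lt_mul'' i7 (mul_lt_mul'' i29 ip (Nat.zero_le _) (Nat.zero_le _))
      (Nat.zero_le _) (Nat.zero_le _)) (Nat.zero_le _) (Nat.zero_le _)
  have hub2 : 336*(m*(ArithmeticFunction.sigma 1 n)) < 609*(m*n) + 609*n := by
    calc 336*(m*(ArithmeticFunction.sigma 1 n))
        = (2*S3)*((6*S7)*((28*S29)*(m*Sp))) := by rw [hσs]; ring
      _ < 3^(α₁+1)*(7^(α₂+1)*(29^(α₃+1)*(m+1)^(α₄+1))) := hub
      _ = 609*(m*n) + 609*n := by rw [hn]; ring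
  -- relaxed bound : 336*σ < 630*n
  have hub3 : m*(336*(ArithmeticFunction.sigma 1 n)) < m*(630*n) := by
    have e1 : (609:ℕ)*n ≤ 21*(30*n) := by omega
    have e2 : 21*(30*n) ≤ 21*(m*n) := Nat.mul_le_mul_left 21 (Nat.mul_le_mul_right n hm30)
    calc m*(336*(ArithmeticFunction.sigma 1 n)) = 336*(m*(ArithmeticFunction.sigma 1 n)) := by
          ring
      _ < 609*(m*n) + 609*n := hub2
      _ ≤ 630*(m*n) := by omega
      _ = m*(630*n) := by ring
  have hub4 : 336*(ArithmeticFunction.sigma 1 n) < 630*n :=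
    Nat.lt_of_mul_lt_mul_left hub3
  -- force n/d = 7
  have hn0 : 0 < n := by rw [hn]; positivity
  have hd0 : 0 < d := Nat.pos_of_dvd_of_pos hdvd hn0
  have hdn : n / d * d = n := Nat.div_mul_cancel hdvd
  have hD8 : n / d < 8 := by
    by_contra h8
    push_neg at h8
    have h8d : 8 * d ≤ n := by
      calc 8*d ≤ (n/d)*d := Nat.mul_le_mul_right d h8
        _ = n := hdn
    omega
  have h7D : n / d = 7 := by omega
  have hn7d : n = 7 * d := by rw [← hdn, h7D]
  have h13 : 7 * ArithmeticFunction.sigma 1 n = 13 * n := by omega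
  -- p ≤ 41
  have hm40 : m ≤ 40 := by
    by_contra hm41
    push_neg at hm41
    have e0 : 7*(336*(m*(ArithmeticFunction.sigma 1 n))) < 7*(609*(m*n) + 609*n) :=
      Nat.mul_lt_mul_of_pos_left hub2 (by norm_num)
    have e1 : 7*(336*(m*(ArithmeticFunction.sigma 1 n)))
        = 336*(m*(7*(ArithmeticFunction.sigma 1 n))) := by ring
    rw [e1, h13] at e0
    have e2 : 336*(m*(13*n)) = 4368*(m*n) := by ring
    rw [e2] at e0
    have e3 : 41*n ≤ m*n := Nat.mul_le_mul_right n hm41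
    omega
  have hpcases : m = 30 ∨ m = 36 ∨ m = 40 := by
    interval_cases m <;> revert hp <;> decide
  -- S29 divides 13*n
  have hdvdσ : S29 ∣ ArithmeticFunction.sigma 1 n := ⟨S3*S7*Sp, by rw [hσs]; ring⟩
  have h13n : S29 ∣ 13*n := by
    have h1 : S29 ∣ 7*(ArithmeticFunction.sigma 1 n) := hdvdσ.mul_left 7
    rwa [h13] at h1
  -- parity
  have hS29odd : ¬ 2 ∣ S29 := by
    intro h2
    have : 2 ∣ 13*n := h2.trans h13n
    rw [Nat.odd_iff] at hodd
    omega
  have hodd3 : (α₃+1) % 2 = 1 := by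
    by_contra hc
    have h2 : 2 ∣ α₃ + 1 := by omega
    have hz : ((α₃+1 : ℕ) : ZMod 2) = 0 := (ZMod.natCast_eq_zero_iff _ _).mpr h2
    rw [← m2] at hz
    exact hS29odd ((ZMod.natCast_eq_zero_iff _ _).mp hz)
  -- master geometric identity
  have hg : 28 * S29 + 1 = 29^(α₃+1) := by omega
  -- 3 ∤ S29
  have not3 : ¬ 3 ∣ S29 := by
    intro hd3
    have hz : ((S29:ℕ) : ZMod 3) = 0 := (ZMod.natCast_eq_zero_iff _ _).mpr hd3
    have hgz := congrArg (Nat.cast : ℕ → ZMod 3) hg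
    push_cast at hgz
    rw [hz] at hgz
    rw [show ((29:ZMod 3)) = -1 from by decide] at hgz
    rw [(Nat.odd_iff.mpr hodd3).neg_one_pow] at hgz
    revert hgz; decide
  -- 29 ∤ S29
  have not29 : ¬ 29 ∣ S29 := by
    intro hd29
    have hz : ((S29:ℕ) : ZMod 29) = 0 := (ZMod.natCast_eq_zero_iff _ _).mpr hd29
    have hgz := congrArg (Nat.cast : ℕ → ZMod 29) hg
    push_cast at hgz
    rw [hz] at hgz
    rw [show ((29:ZMod 29)) = 0 from by decide, zero_pow (by omega : α₃+1 ≠ 0)] at hgz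
    revert hgz; decide
  -- p ∤ S29
  have notp : ¬ (m+1) ∣ S29 := by
    intro hdp
    have hz : ((S29:ℕ) : ZMod (m+1)) = 0 := (ZMod.natCast_eq_zero_iff _ _).mpr hdp
    have hgz := congrArg (Nat.cast : ℕ → ZMod (m+1)) hg
    push_cast at hgz
    rw [hz] at hgz
    have h1 : (29 : ZMod (m+1))^(α₃+1) = 1 := by rw [← hgz]; ring
    rcases hpcases with rfl | rfl | rfl
    · exact odd_pow_ne 10 31 (29 : ZMod 31) (by norm_num) (by norm_num) (by decide)
        (by decide) _ hodd3 h1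
    · exact odd_pow_ne 12 37 (29 : ZMod 37) (by norm_num) (by norm_num) (by decide)
        (by decide) _ hodd3 h1
    · exact odd_pow_ne 40 41 (29 : ZMod 41) (by norm_num) (by norm_num) (by decide)
        (by decide) _ hodd3 h1
  -- S29 ∣ 13 * 7^α₂
  have hre : 13 * n = 3^α₁ * (29^α₃ * ((m+1)^α₄ * (13 * 7^α₂))) := by rw [hn]; ring
  have hstep1 : S29 ∣ 3^α₁ * (29^α₃ * ((m+1)^α₄ * (13 * 7^α₂))) := by rwa [hre] at h13n
  have co3 : Nat.Coprime S29 (3^α₁) :=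
    Nat.Coprime.pow_right _ (((Nat.Prime.coprime_iff_not_dvd p3).mpr not3).symm)
  have co29 : Nat.Coprime S29 (29^α₃) :=
    Nat.Coprime.pow_right _ (((Nat.Prime.coprime_iff_not_dvd p29).mpr not29).symm)
  have cop : Nat.Coprime S29 ((m+1)^α₄) :=
    Nat.Coprime.pow_right _ (((Nat.Prime.coprime_iff_not_dvd hp).mpr notp).symm)
  have hstep2 : S29 ∣ 29^α₃ * ((m+1)^α₄ * (13 * 7^α₂)) := co3.dvd_of_dvd_mul_left hstep1
  have hstep3 : S29 ∣ (m+1)^α₄ * (13 * 7^α₂) := co29.dvd_of_dvd_mul_left hstep2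
  have hS13 : S29 ∣ 13 * 7^α₂ := cop.dvd_of_dvd_mul_left hstep3
  -- final case split on 7 ∣ S29
  by_cases h7d : 7 ∣ S29
  · -- 7 ∣ α₃ + 1
    clear * - h7d m7 hg hS13 p7
    have hz : ((S29:ℕ) : ZMod 7) = 0 := (ZMod.natCast_eq_zero_iff _ _).mpr h7d
    rw [m7] at hz
    have h7c : 7 ∣ α₃ + 1 := (ZMod.natCast_eq_zero_iff _ _).mp hz
    obtain ⟨t, ht⟩ := h7c
    have hdvd7 : ((29:ℕ)^7 - 1) ∣ 29^(α₃+1) - 1 := by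
      rw [ht, pow_mul]
      have := Nat.sub_dvd_pow_sub_pow ((29:ℕ)^7) 1 t
      simpa using this
    have e1 : (29:ℕ)^7 - 1 = 28 * 616067011 := by norm_num
    have e2 : (29:ℕ)^(α₃+1) - 1 = 28 * S29 := by omega
    rw [e1, e2] at hdvd7
    have hTd : (616067011 : ℕ) ∣ S29 :=
      (Nat.mul_dvd_mul_iff_left (by norm_num : 0 < (28:ℕ))).mp hdvd7
    have hM : (88009573 : ℕ) ∣ S29 := Dvd.dvd.trans ⟨7, by norm_num⟩ hTd
    have hMd : (88009573:ℕ) ∣ 13 * 7^α₂ := hM.trans hS13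
    have hcop : Nat.Coprime 88009573 (13 * 7^α₂) := by
      apply Nat.Coprime.mul_right
      · exact (((Nat.Prime.coprime_iff_not_dvd (by norm_num : Nat.Prime 13)).mpr
          (by norm_num)).symm)
      · exact Nat.Coprime.pow_right _ (((Nat.Prime.coprime_iff_not_dvd p7).mpr
          (by norm_num)).symm)
    have := hcop.eq_one_of_dvd hMd
    norm_num at this
  · -- S29 ∣ 13, too big
    clear * - h7d hS13 hbig p7
    have co7 : Nat.Coprime S29 (7^α₂) :=
      Nat.Coprime.pow_right _ (((Nat.Prime.coprime_iff_not_dvd p7).mpr h7d).symm)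
    have : S29 ∣ 13 := (Nat.Coprime.dvd_of_dvd_mul_right co7 hS13)
    have := Nat.le_of_dvd (by norm_num) this
    omega
end
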